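/- arXiv:2305.07858 — 6 statements merged into one kernel-verified Lean document; each statement's English description precedes it below -/
import Mathlib

section
/- For every integer n ≥ 2, the sum over all compositions (c_1, …, c_k) of n all of whose parts satisfy c_i ≥ 2 of the product (c_1 − 1)(c_2 − 1)⋯(c_k − 1) equals 2^{n−2}. -/
/-!
A part equal to `1` contributes the factor `0`, so the restriction to parts `≥ 2` can be dropped
and `w n := ∑_c ∏ (cᵢ - 1)` runs over all compositions of `n`. Splitting off the first part gives
`w (n + 1) = ∑_{a + b = n} a * w b`; comparing this recurrence at `n + 1` and `n + 2` yields
`w (n + 3) = 2 * w (n + 2)`, and `w 2 = 1`.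
-/

open Finset

namespace Composition

variable {n : ℕ}

def tail (c : Composition n) : Composition (n - c.blocks.headI) where
  blocks := c.blocks.tail
  blocks_pos h := c.blocks_pos (List.mem_of_mem_tail h)
  blocks_sum := by
    have := c.blocks.headI_add_tail_sum
    rw [c.blocks_sum] at this
    omega

theorem blocks_eq_headI_cons_tail (c : Composition n) (hn : n ≠ 0) :
    c.blocks = c.blocks.headI :: c.blocks.tail := by
  cases h : c.blocks with
  | nil => exact absurd (c.blocks_eq_nil.1 h) hn
  | cons a l => rfl

theorem heq_of_blocks_eq {m : ℕ} {c : Composition m} {c' : Composition n} (h : m = n)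
    (hb : c.blocks = c'.blocks) : c ≍ c' := by
  subst h
  exact heq_of_eq (Composition.ext hb)

theorem sum_prod_map_blocks_succ {R : Type*} [CommSemiring R] (f : ℕ → R) (n : ℕ) :
    ∑ c : Composition (n + 1), (c.blocks.map f).prod =
      ∑ p ∈ antidiagonal n, f (p.1 + 1) * ∑ c : Composition p.2, (c.blocks.map f).prod := by
  simp_rw [mul_sum]
  rw [sum_sigma']
  have head_bounds (c : Composition (n + 1)) : 1 ≤ c.blocks.headI ∧ c.blocks.headI ≤ n + 1 :=
    have h : c.blocks.headI ∈ c.blocks := by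
      rw [c.blocks_eq_headI_cons_tail n.succ_ne_zero]; exact List.mem_cons_self
    ⟨c.one_le_blocks h, c.blocks_le h⟩
  refine sum_bij' (fun c _ => ⟨(c.blocks.headI - 1, n + 1 - c.blocks.headI), c.tail⟩)
    (fun x hx => ((single (x.1.1 + 1) x.1.1.succ_pos).append x.2).cast (by
      have := HasAntidiagonal.mem_antidiagonal.1 (mem_sigma.1 hx).1; omega)) ?_ ?_ ?_ ?_ ?_
  · intro c _
    have := head_bounds c
    simp only [mem_sigma, HasAntidiagonal.mem_antidiagonal, mem_univ, and_true]
    omega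
  · intros; exact mem_univ _
  · intro c _
    have := head_bounds c
    ext1
    simp only [cast_blocks, append_blocks, single_blocks, tail, Nat.sub_add_cancel this.1]
    exact (c.blocks_eq_headI_cons_tail n.succ_ne_zero).symm
  · rintro ⟨⟨a, b⟩, d⟩ h
    have hab : a + b = n := HasAntidiagonal.mem_antidiagonal.1 (mem_sigma.1 h).1
    refine Sigma.ext ?_ (heq_of_blocks_eq ?_ rfl) <;>
      simp only [cast_blocks, append_blocks, single_blocks, List.cons_append, List.nil_append,
        List.headI_cons, add_tsub_cancel_right, Nat.reduceSubDiff, Prod.mk.injEq, true_and] <;>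
      omega
  · intro c _
    conv_lhs => rw [c.blocks_eq_headI_cons_tail n.succ_ne_zero]
    rw [Nat.sub_add_cancel (head_bounds c).1]
    rfl

theorem sum_prod_map_blocks_zero {R : Type*} [CommSemiring R] (f : ℕ → R) :
    ∑ c : Composition 0, (c.blocks.map f).prod = 1 := by
  rw [sum_congr rfl fun c _ => by rw [c.blocks_eq_nil.2 rfl, List.map_nil, List.prod_nil]]
  simp [composition_card]

end Composition

theorem List.two_le_of_prod_map_sub_one_ne_zero {l : List ℕ} (h : (l.map (· - 1)).prod ≠ 0)
    {i : ℕ} (hi : i ∈ l) : 2 ≤ i := by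
  have : i - 1 ≠ 0 := fun h0 => h (List.prod_eq_zero_iff.2 (h0 ▸ List.mem_map_of_mem hi))
  omega

def sumProdBlocksSubOne (n : ℕ) : ℕ :=
  ∑ c : Composition n, (c.blocks.map (· - 1)).prod

theorem sumProdBlocksSubOne_zero : sumProdBlocksSubOne 0 = 1 :=
  Composition.sum_prod_map_blocks_zero _

theorem sumProdBlocksSubOne_succ (n : ℕ) :
    sumProdBlocksSubOne (n + 1) = ∑ p ∈ antidiagonal n, p.1 * sumProdBlocksSubOne p.2 :=
  Composition.sum_prod_map_blocks_succ _ n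

theorem sumProdBlocksSubOne_add_two (n : ℕ) :
    sumProdBlocksSubOne (n + 2) =
      sumProdBlocksSubOne (n + 1) + ∑ p ∈ antidiagonal n, sumProdBlocksSubOne p.2 := by
  rw [sumProdBlocksSubOne_succ (n + 1), Nat.sum_antidiagonal_succ, sumProdBlocksSubOne_succ]
  simp only [zero_mul, zero_add, add_mul, one_mul, sum_add_distrib]

theorem sumProdBlocksSubOne_add_three (n : ℕ) :
    sumProdBlocksSubOne (n + 3) = 2 * sumProdBlocksSubOne (n + 2) := by
  rw [sumProdBlocksSubOne_add_two (n + 1), Nat.sum_antidiagonal_succ]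
  dsimp only
  rw [← sumProdBlocksSubOne_add_two, two_mul]

theorem sumProdBlocksSubOne_add_two_eq_pow (n : ℕ) : sumProdBlocksSubOne (n + 2) = 2 ^ n := by
  induction n with
  | zero => simp [sumProdBlocksSubOne_add_two, sumProdBlocksSubOne_succ, sumProdBlocksSubOne_zero]
  | succ n ih => rw [sumProdBlocksSubOne_add_three, ih, pow_succ']

/-- For every integer `n ≥ 2`, the sum over all compositions of `n` all of whose parts
are at least `2` of the product of `(part − 1)` over all parts equals `2 ^ (n − 2)`. -/
theorem composition_parts_ge_two_prod_sub_one (n : ℕ) (hn : 2 ≤ n) :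
    ∑ c ∈ Finset.univ.filter (fun c : Composition n => ∀ i ∈ c.blocks, 2 ≤ i),
      (c.blocks.map (fun i => i - 1)).prod = 2 ^ (n - 2) := by
  rw [sum_filter_of_ne fun c _ h _ => List.two_le_of_prod_map_sub_one_ne_zero h]
  obtain ⟨m, rfl⟩ := Nat.exists_eq_add_of_le' hn
  exact sumProdBlocksSubOne_add_two_eq_pow m
end

section
/- For every integer n ≥ 2, the sum over all compositions (c_1, …, c_k) of n all of whose parts satisfy c_i ≥ 2 of the product c_1·(c_2 − 1)(c_3 − 1)⋯(c_k − 1) equals 2 if n = 2, and equals 3·2^{n−3} if n ≥ 3. -/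
/-!
Let `g n = ∑ ∏ (cᵢ - 1)` over the compositions of `n` into parts `≥ 2`. Splitting off the first
part gives `g (k + 1) = ∑_{j < k} (k - j) g j`, and subtracting consecutive instances of this
recurrence gives `g (k + 2) = g (k + 1) + ∑_{j ≤ k} g j`. Hence `∑_{j < k + 2} g j = g (k + 2)`,
so `g` doubles from `g 2 = 1` on: `g (k + 2) = 2 ^ k`. Splitting off the first part of the sum
in question gives `∑_{j < k} (k + 1 - j) g j = g (k + 1) + ∑_{j < k} g j` for `n = k + 1`, which is
`2 ^ (n - 2) + 2 ^ (n - 3)` for `n ≥ 3`.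
-/

open Finset

def compositionsAtLeast (a n : ℕ) : Finset (List ℕ) :=
  (univ.filter fun c : Composition n => ∀ i ∈ c.blocks, a ≤ i).image Composition.blocks

section compositionsAtLeast

variable {a n : ℕ}

theorem sum_filter_composition_eq_sum_compositionsAtLeast {M : Type*} [AddCommMonoid M]
    (F : List ℕ → M) :
    ∑ c ∈ univ.filter (fun c : Composition n => ∀ i ∈ c.blocks, a ≤ i), F c.blocks =
      ∑ l ∈ compositionsAtLeast a n, F l :=
  (sum_image fun _ _ _ _ h => Composition.ext h).symm

theorem mem_compositionsAtLeast (ha : 0 < a) {l : List ℕ} :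
    l ∈ compositionsAtLeast a n ↔ l.sum = n ∧ ∀ i ∈ l, a ≤ i := by
  simp only [compositionsAtLeast, mem_image, mem_filter, mem_univ, true_and]
  constructor
  · rintro ⟨c, hc, rfl⟩
    exact ⟨c.blocks_sum, hc⟩
  · rintro ⟨hsum, hl⟩
    exact ⟨⟨l, fun hi => ha.trans_le (hl _ hi), hsum⟩, hl, rfl⟩

theorem nil_mem_compositionsAtLeast (ha : 0 < a) : [] ∈ compositionsAtLeast a n ↔ n = 0 := by
  simp [mem_compositionsAtLeast ha, eq_comm]

theorem cons_mem_compositionsAtLeast (ha : 0 < a) {m : ℕ} {l : List ℕ} :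
    m :: l ∈ compositionsAtLeast a n ↔ a ≤ m ∧ m ≤ n ∧ l ∈ compositionsAtLeast a (n - m) := by
  simp only [mem_compositionsAtLeast ha, List.sum_cons, List.forall_mem_cons]
  constructor
  · rintro ⟨hsum, hm, hl⟩
    exact ⟨hm, by omega, by omega, hl⟩
  · rintro ⟨hm, hmn, hsum, hl⟩
    exact ⟨by omega, hm, hl⟩

theorem compositionsAtLeast_zero (ha : 0 < a) : compositionsAtLeast a 0 = {[]} := by
  ext (_ | ⟨m, l⟩)
  · simp [nil_mem_compositionsAtLeast ha]
  · simp only [cons_mem_compositionsAtLeast ha, mem_singleton, reduceCtorEq, iff_false]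
    omega

theorem sum_compositionsAtLeast_eq_sum_range_cons {M : Type*} [AddCommMonoid M]
    (ha : 0 < a) (hn : 0 < n) (F : List ℕ → M) :
    ∑ l ∈ compositionsAtLeast a n, F l =
      ∑ j ∈ range (n + 1 - a), ∑ l ∈ compositionsAtLeast a j, F ((n - j) :: l) := by
  have head_cons_tail : ∀ l ∈ compositionsAtLeast a n, (n - (n - l.headI)) :: l.tail = l := by
    rintro (_ | ⟨m, l⟩) hl
    · exact absurd ((nil_mem_compositionsAtLeast ha).1 hl) hn.ne'
    · obtain ⟨-, hmn, -⟩ := (cons_mem_compositionsAtLeast ha).1 hl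
      rw [List.headI_cons, List.tail_cons, Nat.sub_sub_self hmn]
  rw [sum_sigma']
  refine sum_nbij' (fun l => ⟨n - l.headI, l.tail⟩) (fun p => (n - p.1) :: p.2) ?_ ?_
    head_cons_tail ?_ fun l hl => congrArg F (head_cons_tail l hl).symm
  · rintro (_ | ⟨m, l⟩) hl
    · exact absurd ((nil_mem_compositionsAtLeast ha).1 hl) hn.ne'
    · obtain ⟨ham, hmn, hl⟩ := (cons_mem_compositionsAtLeast ha).1 hl
      exact mem_sigma.2 ⟨mem_range.2 (show n - m < n + 1 - a by omega), hl⟩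
  · rintro ⟨j, l⟩ hl
    obtain ⟨hj, hl⟩ : j < n + 1 - a ∧ l ∈ compositionsAtLeast a j := by
      simpa only [mem_sigma, mem_range] using hl
    dsimp only
    refine (cons_mem_compositionsAtLeast ha).2 ⟨by omega, by omega, ?_⟩
    rwa [Nat.sub_sub_self (by omega)]
  · rintro ⟨j, l⟩ hl
    have hj : j < n + 1 - a := mem_range.1 (mem_sigma.1 hl).1
    simp only [List.headI_cons, List.tail_cons, Nat.sub_sub_self (show j ≤ n by omega)]

end compositionsAtLeast

def predProdSum (n : ℕ) : ℕ :=
  ∑ l ∈ compositionsAtLeast 2 n, (l.map (· - 1)).prod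

theorem predProdSum_zero : predProdSum 0 = 1 := by
  simp [predProdSum, compositionsAtLeast_zero]

theorem predProdSum_succ (k : ℕ) :
    predProdSum (k + 1) = ∑ j ∈ range k, (k - j) * predProdSum j := by
  rw [predProdSum, sum_compositionsAtLeast_eq_sum_range_cons two_pos (by omega : 0 < k + 1),
    show k + 1 + 1 - 2 = k by omega]
  refine sum_congr rfl fun j _ => ?_
  simp only [predProdSum, mul_sum, List.map_cons, List.prod_cons]
  rw [show k + 1 - j - 1 = k - j by omega]

theorem predProdSum_add_two (k : ℕ) :
    predProdSum (k + 2) = predProdSum (k + 1) + ∑ j ∈ range (k + 1), predProdSum j := by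
  rw [predProdSum_succ, predProdSum_succ, sum_range_succ _ k, Nat.add_sub_cancel_left, one_mul,
    sum_range_succ predProdSum k, ← add_assoc, ← sum_add_distrib]
  congr 1
  refine sum_congr rfl fun j hj => ?_
  rw [mem_range] at hj
  rw [show k + 1 - j = k - j + 1 by omega, add_one_mul]

theorem sum_range_predProdSum (k : ℕ) :
    ∑ j ∈ range (k + 2), predProdSum j = predProdSum (k + 2) := by
  induction k with
  | zero => simp [sum_range_succ, predProdSum_zero, predProdSum_succ]
  | succ k ih => rw [sum_range_succ, ih, predProdSum_add_two (k + 1), ih]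

theorem predProdSum_add_two_eq_pow (k : ℕ) : predProdSum (k + 2) = 2 ^ k := by
  induction k with
  | zero => simp [predProdSum_succ, predProdSum_zero]
  | succ k ih => rw [predProdSum_add_two, sum_range_predProdSum, ih, pow_succ, mul_two]

theorem sum_head_mul_prod_tail (k : ℕ) :
    ∑ l ∈ compositionsAtLeast 2 (k + 1), l.headI * (l.tail.map (· - 1)).prod =
      predProdSum (k + 1) + ∑ j ∈ range k, predProdSum j := by
  rw [sum_compositionsAtLeast_eq_sum_range_cons two_pos (by omega : 0 < k + 1),
    show k + 1 + 1 - 2 = k by omega, predProdSum_succ, ← sum_add_distrib]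
  refine sum_congr rfl fun j hj => ?_
  rw [mem_range] at hj
  simp only [List.headI_cons, List.tail_cons, predProdSum, ← mul_sum]
  rw [show k + 1 - j = k - j + 1 by omega, add_one_mul]

/-- For every integer `n ≥ 2`, the sum over all compositions `(c₁, …, c_k)` of `n` all of whose
parts are at least `2` of the product `c₁ · (c₂ − 1) ⋯ (c_k − 1)` equals `2` if `n = 2`
and `3 · 2^(n−3)` if `n ≥ 3`. -/
theorem composition_parts_ge_two_first_part_prod (n : ℕ) (hn : 2 ≤ n) :
    ∑ c ∈ Finset.univ.filter (fun c : Composition n => ∀ i ∈ c.blocks, 2 ≤ i),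
      c.blocks.headI * ((c.blocks.tail).map (fun i => i - 1)).prod
      = if n = 2 then 2 else 3 * 2 ^ (n - 3) := by
  rw [sum_filter_composition_eq_sum_compositionsAtLeast
    fun l => l.headI * (l.tail.map (· - 1)).prod]
  obtain rfl | ⟨k, rfl⟩ : n = 2 ∨ ∃ k, n = k + 3 := by
    rcases hn.eq_or_lt with h | h
    · exact .inl h.symm
    · exact .inr ⟨n - 3, by omega⟩
  · rw [sum_head_mul_prod_tail 1, if_pos rfl]
    simp [predProdSum_succ, predProdSum_zero]
  · rw [sum_head_mul_prod_tail (k + 2), sum_range_predProdSum, predProdSum_add_two_eq_pow,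
      predProdSum_add_two_eq_pow, if_neg (by omega), Nat.add_sub_cancel, pow_succ]
    ring
end

section
/- In NSym, for every integer n ≥ 1: Σ_{I ⊨ n} ε^I · Ψ^I = Σ_{I = (i_1, …, i_l) ⊨ n} i_1·(i_2 − 1)⋯(i_l − 1) · Λ^I, where both sums range over all compositions I of n. -/
open scoped Classical

noncomputable section

/-- `NSym = ℚ⟨Λ₁, Λ₂, …⟩`, the free associative `ℚ`-algebra on noncommuting generators. -/
abbrev NSym : Type := FreeAlgebra ℚ ℕ

/-- The elementary noncommutative symmetric functions: `Λ 0 = 1` and `Λ (k+1)` is the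
`(k+1)`-st generator. -/
def Lam : ℕ → NSym
  | 0 => 1
  | k + 1 => FreeAlgebra.ι ℚ k

/-- The complete homogeneous noncommutative symmetric functions, defined by `S 0 = 1` and
`S n = ∑_{k=1}^{n} (−1)^{k−1} Λ_k S_{n−k}` for `n ≥ 1`. -/
def Sc : ℕ → NSym
  | 0 => 1
  | n + 1 => ∑ k ∈ Finset.range (n + 1), ((-1 : ℚ) ^ k) • (Lam (k + 1) * Sc (n - k))
  decreasing_by exact Nat.lt_succ_of_le (Nat.sub_le _ _)

/-- The noncommutative power sums of the first kind:
`Ψ n = ∑_{k=0}^{n−1} (−1)^k (n−k) Λ_k S_{n−k}`. -/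
def Psi (n : ℕ) : NSym :=
  ∑ k ∈ Finset.range n, ((-1 : ℚ) ^ k * ((n - k : ℕ) : ℚ)) • (Lam k * Sc (n - k))

/-- `Λ^I`, the product of the `Λ`'s over the parts of a composition. -/
def LamProd {n : ℕ} (I : Composition n) : NSym := (I.blocks.map Lam).prod

/-- `S^I`, the product of the `S`'s over the parts of a composition. -/
def ScProd {n : ℕ} (I : Composition n) : NSym := (I.blocks.map Sc).prod

/-- `Ψ^I`, the product of the `Ψ`'s over the parts of a composition. -/
def PsiProd {n : ℕ} (I : Composition n) : NSym := (I.blocks.map Psi).prod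

/-- `J` is a coarsening of `I` if `I` can be partitioned into consecutive nonempty blocks
whose block sums, in order, form `J`. -/
def IsCoarsening (I J : List ℕ) : Prop :=
  ∃ P : List (List ℕ), (∀ p ∈ P, p ≠ []) ∧ P.flatten = I ∧ P.map List.sum = J

/-- The ribbon Schur function `R_I = ∑_{J a coarsening of I} (−1)^{ℓ(I)−ℓ(J)} S^J`. -/
def Rib {n : ℕ} (I : Composition n) : NSym :=
  ∑ J : Composition n,
    if IsCoarsening I.blocks J.blocks then ((-1 : ℚ) ^ (I.length - J.length)) • ScProd J else 0

/-!
Write `λ(t) = ∑ Λₙ tⁿ`, `σ(-t) = ∑ (-1)ⁿ Sₙ tⁿ` and `N(t) = t λ'(t)`; the recursion defining `S`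
says `λ(t) σ(-t) = 1`, and the one defining `Ψ` says `∑ (-1)ⁿ⁻¹ Ψₙ tⁿ = N(t) σ(-t)`. A sum over
the compositions of `n` of products `g(i₁) ⋯ g(i_l)` is the `n`-th coefficient of
`(1 - ∑ g(i) tⁱ)⁻¹`. Hence the left side is a coefficient of `A = (1 - N σ(-t))⁻¹`, and, after
splitting off the first part, the right side is the same coefficient of `1 + N M` with
`M = (1 - ∑ (i - 1) Λᵢ tⁱ)⁻¹ = (λ - N)⁻¹`. Now `σ(-t) A` is a right inverse of the unit `λ - N`,
so it is `M`, and `A = λ M = (λ - N) M + N M = 1 + N M`.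
-/

open Finset PowerSeries

theorem List.prod_map_smul {ι M N : Type*} [CommMonoid M] [Monoid N] [MulAction M N]
    [IsScalarTower M N N] [SMulCommClass M N N] (l : List ι) (c : ι → M) (f : ι → N) :
    (l.map fun i => c i • f i).prod = (l.map c).prod • (l.map f).prod := by
  induction l with
  | nil => simp
  | cons a t ih => simp [ih, smul_mul_smul_comm]

theorem List.pow_sum_sub_length {M : Type*} [Monoid M] (x : M) (l : List ℕ)
    (hl : ∀ i ∈ l, 1 ≤ i) : x ^ (l.sum - l.length) = (l.map fun i => x ^ (i - 1)).prod := by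
  induction l with
  | nil => simp
  | cons a t ih =>
    have ha : 1 ≤ a := hl a List.mem_cons_self
    have ht : ∀ i ∈ t, 1 ≤ i := fun i hi => hl i (List.mem_cons_of_mem a hi)
    have hlen := List.length_le_sum_of_one_le t ht
    rw [List.sum_cons, List.length_cons, List.map_cons, List.prod_cons, ← ih ht, ← pow_add]
    congr 1
    omega

theorem neg_one_pow_sub_of_le {R : Type*} [Monoid R] [HasDistribNeg R] {k n : ℕ} (h : k ≤ n) :
    (-1 : R) ^ (n - k) = (-1) ^ n * (-1) ^ k := by
  obtain ⟨m, rfl⟩ := Nat.exists_eq_add_of_le h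
  rw [Nat.add_sub_cancel_left, pow_add, ((Commute.neg_one_left (-1 : R)).pow_pow k m).eq,
    mul_assoc, ← pow_add, Even.neg_one_pow ⟨k, rfl⟩, mul_one]

namespace Composition

variable {n : ℕ}

instance : Unique (Composition 0) where
  default := ones 0
  uniq I := Composition.ext <| List.eq_nil_of_length_eq_zero (Nat.le_zero.1 I.length_le)

theorem headI_cons_tail_blocks (I : Composition (n + 1)) :
    I.blocks.headI :: I.blocks.tail = I.blocks := by
  cases h : I.blocks with
  | nil => simpa [h] using I.blocks_sum
  | cons a t => rfl

theorem one_le_headI_blocks (I : Composition (n + 1)) : 1 ≤ I.blocks.headI :=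
  I.one_le_blocks (by rw [← headI_cons_tail_blocks]; exact List.mem_cons_self)

def consOfLE {k : ℕ} (hk : k ≤ n) (J : Composition (n - k)) : Composition (n + 1) where
  blocks := (k + 1) :: J.blocks
  blocks_pos := by
    rintro i (_ | ⟨_, hi⟩)
    exacts [k.succ_pos, J.blocks_pos hi]
  blocks_sum := by
    rw [List.sum_cons, J.blocks_sum]
    omega

@[simp]
theorem blocks_consOfLE {k : ℕ} (hk : k ≤ n) (J : Composition (n - k)) :
    (consOfLE hk J).blocks = (k + 1) :: J.blocks := rfl

variable (n) in
def consEquiv : Composition (n + 1) ≃ Σ k : Fin (n + 1), Composition (n - k) where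
  toFun I :=
    have hsum := I.blocks.headI_add_tail_sum
    have hpos := I.one_le_headI_blocks
    ⟨⟨I.blocks.headI - 1, by rw [I.blocks_sum] at hsum; omega⟩,
      ⟨I.blocks.tail, fun hi => I.blocks_pos (List.mem_of_mem_tail hi),
        by rw [I.blocks_sum] at hsum; simp only; omega⟩⟩
  invFun p := consOfLE p.1.is_le p.2
  left_inv I := by
    ext1
    rw [blocks_consOfLE, Nat.sub_add_cancel I.one_le_headI_blocks, headI_cons_tail_blocks]
  right_inv := by
    rintro ⟨k, J⟩
    refine Sigma.ext (by simp [consOfLE]) (heq_of_eq ?_)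
    ext1
    simp [consOfLE]

theorem sum_succ {M : Type*} [AddCommMonoid M] (F : Composition (n + 1) → M) :
    ∑ I, F I = ∑ k : Fin (n + 1), ∑ J : Composition (n - k), F (consOfLE k.is_le J) := by
  rw [← (consEquiv n).symm.sum_comp, ← univ_sigma_univ, sum_sigma]
  rfl

end Composition

section CompositionSum

variable {R : Type*}

def compositionSum [Semiring R] (g : ℕ → R) (n : ℕ) : R :=
  ∑ I : Composition n, (I.blocks.map g).prod

theorem compositionSum_zero [Semiring R] (g : ℕ → R) : compositionSum g 0 = 1 := by
  rw [compositionSum, Fintype.sum_unique]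
  rfl

theorem compositionSum_succ [Semiring R] (g : ℕ → R) (n : ℕ) :
    compositionSum g (n + 1) = ∑ k ∈ range (n + 1), g (k + 1) * compositionSum g (n - k) := by
  rw [compositionSum, Composition.sum_succ, ← Fin.sum_univ_eq_sum_range]
  refine sum_congr rfl fun k _ => ?_
  simp only [Composition.blocks_consOfLE, List.map_cons, List.prod_cons, compositionSum, mul_sum]

theorem one_sub_mk_mul_mk_compositionSum [Ring R] (g : ℕ → R) (hg : g 0 = 0) :
    (1 - mk g) * mk (compositionSum g) = 1 := by
  rw [sub_mul, one_mul, sub_eq_iff_eq_add]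
  ext (_ | n)
  · simp [compositionSum_zero, hg]
  · rw [map_add, coeff_mul, Nat.sum_antidiagonal_succ, Nat.sum_antidiagonal_eq_sum_range_succ
      (fun i j => coeff (i + 1) (mk g) * coeff j (mk (compositionSum g)))]
    simp [compositionSum_succ, hg]

end CompositionSum

namespace NSym

theorem sum_neg_one_pow_smul_Lam_mul_Sc {n : ℕ} (hn : n ≠ 0) :
    ∑ k ∈ range (n + 1), (-1 : ℚ) ^ k • (Lam k * Sc (n - k)) = 0 := by
  obtain ⟨m, rfl⟩ := Nat.exists_eq_succ_of_ne_zero hn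
  rw [sum_range_succ', pow_zero, one_smul, Lam, one_mul, Nat.sub_zero, Sc, ← sum_add_distrib]
  refine sum_eq_zero fun k _ => ?_
  rw [pow_succ, mul_neg_one, neg_smul, Nat.succ_sub_succ, neg_add_cancel]

theorem Psi_eq_neg_sum {n : ℕ} (hn : n ≠ 0) :
    Psi n = -∑ k ∈ range (n + 1), ((-1 : ℚ) ^ k * k) • (Lam k * Sc (n - k)) := by
  have hPsi :
      Psi n = ∑ k ∈ range (n + 1), ((-1 : ℚ) ^ k * (n - k : ℕ)) • (Lam k * Sc (n - k)) := by
    simp [Psi, sum_range_succ]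
  rw [hPsi, eq_neg_iff_add_eq_zero, ← sum_add_distrib, ← smul_zero (n : ℚ),
    ← sum_neg_one_pow_smul_Lam_mul_Sc hn, smul_sum]
  refine sum_congr rfl fun k hk => ?_
  rw [← add_smul, smul_smul, Nat.cast_sub (mem_range_succ_iff.1 hk)]
  congr 1
  ring

def lamSeries : PowerSeries NSym := mk Lam

/-- `σ(-t) = ∑ (-1)ⁿ Sₙ tⁿ`. -/
def scAltSeries : PowerSeries NSym := mk fun n => (-1 : ℚ) ^ n • Sc n

/-- `t λ'(t)`. -/
def eulerLamSeries : PowerSeries NSym := mk fun n => (n : ℚ) • Lam n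

theorem lamSeries_mul_scAltSeries : lamSeries * scAltSeries = 1 := by
  ext (_ | n)
  · simp [lamSeries, scAltSeries, Lam, Sc]
  · rw [coeff_mul, Nat.sum_antidiagonal_eq_sum_range_succ_mk, coeff_one, if_neg n.succ_ne_zero,
      ← smul_zero ((-1 : ℚ) ^ (n + 1)), ← sum_neg_one_pow_smul_Lam_mul_Sc n.succ_ne_zero, smul_sum]
    refine sum_congr rfl fun k hk => ?_
    rw [lamSeries, scAltSeries, coeff_mk, coeff_mk, mul_smul_comm, smul_smul,
      neg_one_pow_sub_of_le (mem_range_succ_iff.1 hk)]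

theorem mk_neg_one_pow_smul_Psi :
    mk (fun n => (-1 : ℚ) ^ (n - 1) • Psi n) = eulerLamSeries * scAltSeries := by
  ext (_ | n)
  · simp [eulerLamSeries, Psi]
  · rw [coeff_mk, coeff_mul, Nat.sum_antidiagonal_eq_sum_range_succ_mk,
      Psi_eq_neg_sum n.succ_ne_zero, smul_neg, ← neg_smul, smul_sum]
    refine sum_congr rfl fun k hk => ?_
    rw [eulerLamSeries, scAltSeries, coeff_mk, coeff_mk, smul_mul_smul_comm, smul_smul,
      neg_one_pow_sub_of_le (mem_range_succ_iff.1 hk), Nat.add_sub_cancel, pow_succ]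
    congr 1
    ring

theorem one_sub_mk_pred_smul_Lam :
    1 - mk (fun i => ((i - 1 : ℕ) : ℚ) • Lam i) = lamSeries - eulerLamSeries := by
  ext (_ | n)
  · simp [lamSeries, eulerLamSeries, Lam]
  · simp [lamSeries, eulerLamSeries, add_smul]

theorem mk_compositionSum_neg_one_pow_smul_Psi :
    mk (compositionSum fun i => (-1 : ℚ) ^ (i - 1) • Psi i)
      = 1 + eulerLamSeries * mk (compositionSum fun i => ((i - 1 : ℕ) : ℚ) • Lam i) := by
  set A := mk (compositionSum fun i => (-1 : ℚ) ^ (i - 1) • Psi i)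
  set M := mk (compositionSum fun i => ((i - 1 : ℕ) : ℚ) • Lam i)
  have hA : (1 - eulerLamSeries * scAltSeries) * A = 1 := by
    rw [← mk_neg_one_pow_smul_Psi]
    exact one_sub_mk_mul_mk_compositionSum _ (by simp [Psi])
  have hM : (lamSeries - eulerLamSeries) * M = 1 := by
    rw [← one_sub_mk_pred_smul_Lam]
    exact one_sub_mk_mul_mk_compositionSum _ (by simp)
  have hunit : IsUnit (lamSeries - eulerLamSeries) := by
    rw [isUnit_iff_constantCoeff]
    simp [lamSeries, eulerLamSeries, Lam]
  have hσA : scAltSeries * A = M := by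
    refine hunit.mul_left_cancel ?_
    rw [hM, ← hA, sub_mul, sub_mul, ← mul_assoc, lamSeries_mul_scAltSeries, one_mul, mul_assoc]
  calc A = lamSeries * (scAltSeries * A) := by
        rw [← mul_assoc, lamSeries_mul_scAltSeries, one_mul]
    _ = (lamSeries - eulerLamSeries) * M + eulerLamSeries * M := by
        rw [hσA, sub_mul, sub_add_cancel]
    _ = 1 + eulerLamSeries * M := by rw [hM]

theorem sum_neg_one_pow_smul_PsiProd (n : ℕ) :
    ∑ I : Composition n, ((-1 : ℚ) ^ (n - I.length)) • PsiProd I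
      = compositionSum (fun i => (-1 : ℚ) ^ (i - 1) • Psi i) n := by
  refine sum_congr rfl fun I _ => ?_
  rw [List.prod_map_smul, ← List.pow_sum_sub_length _ _ fun i hi => I.one_le_blocks hi,
    I.blocks_sum]
  rfl

theorem sum_headI_mul_smul_LamProd (n : ℕ) :
    ∑ I : Composition (n + 1),
        ((I.blocks.headI * ((I.blocks.tail).map (fun i => i - 1)).prod : ℕ) : ℚ) • LamProd I
      = coeff (n + 1)
          (eulerLamSeries * mk (compositionSum fun i => ((i - 1 : ℕ) : ℚ) • Lam i)) := by
  rw [Composition.sum_succ, coeff_mul, Nat.sum_antidiagonal_succ,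
    Nat.sum_antidiagonal_eq_sum_range_succ_mk, ← Fin.sum_univ_eq_sum_range]
  simp only [eulerLamSeries, coeff_mk, compositionSum, Nat.cast_zero, zero_smul, zero_mul,
    sum_const_zero, zero_add, mul_sum]
  refine sum_congr rfl fun k _ => sum_congr rfl fun J _ => ?_
  simp only [LamProd, Composition.blocks_consOfLE, List.headI_cons, List.tail_cons, List.map_cons,
    List.prod_cons, List.prod_map_smul, Nat.cast_mul, Nat.cast_list_prod, List.map_map, mul_smul,
    smul_mul_smul_comm, Function.comp_def]

end NSym

/-- In `NSym`, for every `n ≥ 1`: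
`∑_{I ⊨ n} ε^I Ψ^I = ∑_{I=(i₁,…,i_l) ⊨ n} i₁(i₂−1)⋯(i_l−1) Λ^I`. -/
theorem sum_eps_psi_eq_sum_coeff_lam (n : ℕ) (hn : 1 ≤ n) :
    ∑ I : Composition n, ((-1 : ℚ) ^ (n - I.length)) • PsiProd I
      = ∑ I : Composition n,
          ((I.blocks.headI * ((I.blocks.tail).map (fun i => i - 1)).prod : ℕ) : ℚ) •
            LamProd I := by
  obtain ⟨m, rfl⟩ := Nat.exists_eq_add_of_le' hn
  rw [NSym.sum_neg_one_pow_smul_PsiProd, NSym.sum_headI_mul_smul_LamProd,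
    ← coeff_mk (m + 1) (compositionSum _), NSym.mk_compositionSum_neg_one_pow_smul_Psi, map_add,
    coeff_one, if_neg m.succ_ne_zero, zero_add]

end
end

section
/- In NSym, for every integer n ≥ 1: 2 · Σ_{I = (i_1, …, i_l) ⊨ n} i_1·(i_2 − 1)⋯(i_l − 1) · Λ^I = Σ_{I ∈ 𝒞_n} 2^{m_1(I)} · R_I, where the first sum is over all compositions I of n, 𝒞_n is the set of compositions of n all of whose parts are 1 or 2 and whose last part is 1, and m_1(I) is the number of parts of I equal to 1. -/
open scoped Classical

noncomputable section

/-!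
Expand everything in the basis `Λ^L`. Since `S_m = ∑_{L ⊨ m} (-1)^{m-ℓ(L)} Λ^L`, the product
`S^J` is the signed sum of `Λ^L` over the refinements `L` of `J`, i.e. over the `L` whose set of
partial sums contains that of `J`; coarsening is the reverse inclusion. Compositions of `n`
correspond to subsets of `(0, n)`, so summing `(-1)^{ℓ(J)}` over the `J` between `I` and `L`
shows that `Λ^L` occurs in `R_I` with coefficient `±1` if `I` and `L` have no common descent,
and `0` otherwise.

On the right-hand side write `I ∈ 𝒞_n` as `J·1`; the weight `(-1)^{ℓ(I)} 2^{m₁(I)}` is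
multiplicative (`-2` for a part `1`, `-1` for a part `2`), so the coefficient of `Λ^L` is
`∓2 W(n-1)`, where `W(m)` is the signed weight of the compositions of `m` into `1`s and `2`s
avoiding the partial sums of `L`. By the last part, `W(m) = -2 W(m-1) - W(m-2)` off these partial
sums and `W(m) = 0` on them. The characteristic polynomial is `(X + 1)²`, so across a part `l` of
`L` the value of `W` gets multiplied by `±(l - 1)` (by `±l` across the first part), and
`W(n-1) = ±i₁(i₂-1)⋯(iₗ-1)`.
-/

open Finset

def compositionLists (n : ℕ) : Finset (List ℕ) :=
  (univ : Finset (Composition n)).map ⟨Composition.blocks, fun _ _ => Composition.ext⟩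

theorem mem_compositionLists {n : ℕ} {L : List ℕ} :
    L ∈ compositionLists n ↔ (∀ x ∈ L, 0 < x) ∧ L.sum = n := by
  simp only [compositionLists, mem_map, mem_univ, true_and]
  exact ⟨fun ⟨c, hc⟩ => hc ▸ ⟨fun _ => c.blocks_pos, c.blocks_sum⟩,
    fun ⟨hpos, hsum⟩ => ⟨⟨L, hpos _, hsum⟩, rfl⟩⟩

theorem sum_compositionLists {M : Type*} [AddCommMonoid M] (n : ℕ) (f : List ℕ → M) :
    ∑ L ∈ compositionLists n, f L = ∑ c : Composition n, f c.blocks :=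
  sum_map _ _ _

theorem card_compositionLists (n : ℕ) : #(compositionLists n) = 2 ^ (n - 1) := by
  rw [compositionLists, card_map, card_univ, composition_card]

theorem eq_nil_of_sum_eq_zero {L : List ℕ} (hpos : ∀ x ∈ L, 0 < x) (hsum : L.sum = 0) :
    L = [] := by
  cases L with
  | nil => rfl
  | cons x L => simp at hsum; exact absurd hsum.1 (hpos x (by simp)).ne'

theorem compositionLists_zero : compositionLists 0 = {[]} := by
  ext L
  rw [mem_compositionLists, mem_singleton]
  exact ⟨fun h => eq_nil_of_sum_eq_zero h.1 h.2, by rintro rfl; simp⟩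

theorem mem_compositionLists_succ {m : ℕ} {L : List ℕ} :
    L ∈ compositionLists (m + 1) ↔
      ∃ k < m + 1, ∃ J ∈ compositionLists (m - k), (k + 1) :: J = L := by
  constructor
  · intro hL
    obtain ⟨hpos, hsum⟩ := mem_compositionLists.1 hL
    rcases L with _ | ⟨x, J⟩
    · simp at hsum
    have hx := hpos x (by simp)
    rw [List.sum_cons] at hsum
    exact ⟨x - 1, by omega, J, mem_compositionLists.2 ⟨fun y hy => hpos y (by simp [hy]),
      by omega⟩, by rw [Nat.sub_add_cancel hx]⟩
  · rintro ⟨k, hk, J, hJ, rfl⟩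
    obtain ⟨hpos, hsum⟩ := mem_compositionLists.1 hJ
    refine mem_compositionLists.2 ⟨fun y hy => ?_, by rw [List.sum_cons, hsum]; omega⟩
    rcases List.mem_cons.1 hy with rfl | hy
    exacts [Nat.succ_pos k, hpos y hy]

theorem sum_compositionLists_succ_cons {M : Type*} [AddCommMonoid M] (m : ℕ)
    (f : List ℕ → M) :
    ∑ L ∈ compositionLists (m + 1), f L
      = ∑ k ∈ range (m + 1), ∑ J ∈ compositionLists (m - k), f ((k + 1) :: J) := by
  rw [sum_sigma']
  refine (sum_nbij' (fun p : Σ _ : ℕ, List ℕ => (p.1 + 1) :: p.2)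
    (fun L => (⟨L.headI - 1, L.tail⟩ : Σ _ : ℕ, List ℕ)) ?_ ?_ (fun _ _ => rfl) ?_
    fun _ _ => rfl).symm
  · rintro ⟨k, J⟩ h
    rw [mem_sigma, mem_range] at h
    exact mem_compositionLists_succ.2 ⟨k, h.1, J, h.2, rfl⟩
  all_goals
    intro L hL
    obtain ⟨k, hk, J, hJ, rfl⟩ := mem_compositionLists_succ.1 hL
  · exact mem_sigma.2 ⟨mem_range.2 hk, hJ⟩
  · rfl

theorem sum_compositionLists_reverse {M : Type*} [AddCommMonoid M] (n : ℕ) (f : List ℕ → M) :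
    ∑ L ∈ compositionLists n, f L.reverse = ∑ L ∈ compositionLists n, f L := by
  simp only [sum_compositionLists]
  exact Fintype.sum_equiv (Function.Involutive.toPerm _ Composition.reverse_involutive) _ _
    fun c => rfl

theorem sum_compositionLists_succ_append {M : Type*} [AddCommMonoid M] (m : ℕ)
    (f : List ℕ → M) :
    ∑ L ∈ compositionLists (m + 1), f L
      = ∑ k ∈ range (m + 1), ∑ J ∈ compositionLists (m - k), f (J ++ [k + 1]) := by
  rw [← sum_compositionLists_reverse, sum_compositionLists_succ_cons]
  refine sum_congr rfl fun k _ => ?_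
  rw [← sum_compositionLists_reverse]
  simp

/-- For a composition of `n`: its descent set together with `n`. -/
def cuts : List ℕ → Finset ℕ
  | [] => ∅
  | x :: L => insert x ((cuts L).image (x + ·))

theorem cuts_append (A B : List ℕ) :
    cuts (A ++ B) = cuts A ∪ (cuts B).image (A.sum + ·) := by
  induction A with
  | nil => simp [cuts]
  | cons x A ih =>
    simp only [List.cons_append, cuts, ih, image_union, image_image, insert_union, List.sum_cons]
    congr 2
    ext; simp [add_assoc]

theorem cuts_singleton (k : ℕ) : cuts [k] = {k} := by
  simp [cuts]

theorem cuts_append_singleton (A : List ℕ) (k : ℕ) :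
    cuts (A ++ [k]) = insert (A.sum + k) (cuts A) := by
  simp [cuts_append, cuts]

theorem sum_mem_cuts {L : List ℕ} (h : L ≠ []) : L.sum ∈ cuts L := by
  obtain ⟨A, k, rfl⟩ := (List.eq_nil_or_concat' L).resolve_left h
  simp [cuts_append_singleton]

theorem le_sum_of_mem_cuts {L : List ℕ} {a : ℕ} (ha : a ∈ cuts L) : a ≤ L.sum := by
  induction L generalizing a with
  | nil => simp [cuts] at ha
  | cons x L ih =>
    simp only [cuts, mem_insert, mem_image] at ha
    rcases ha with rfl | ⟨b, hb, rfl⟩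
    · simp
    · simpa using ih hb

theorem pos_of_mem_cuts {L : List ℕ} (hpos : ∀ x ∈ L, 0 < x) {a : ℕ} (ha : a ∈ cuts L) :
    0 < a := by
  induction L generalizing a with
  | nil => simp [cuts] at ha
  | cons x L ih =>
    simp only [cuts, mem_insert, mem_image] at ha
    rcases ha with rfl | ⟨b, -, rfl⟩
    · exact hpos a (by simp)
    · have := hpos x (by simp)
      omega

theorem card_cuts {L : List ℕ} (hpos : ∀ x ∈ L, 0 < x) : #(cuts L) = L.length := by
  induction L with
  | nil => rfl
  | cons x L ih =>
    have hL : ∀ y ∈ L, 0 < y := fun y hy => hpos y (by simp [hy])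
    rw [cuts, card_insert_of_notMem, card_image_of_injective _ (add_right_injective x), ih hL,
      List.length_cons]
    intro hx
    obtain ⟨b, hb, hbx⟩ := mem_image.1 hx
    have := pos_of_mem_cuts hL hb
    omega

theorem head_notMem_image_cuts {L : List ℕ} (hpos : ∀ x ∈ L, 0 < x) (x : ℕ) :
    x ∉ (cuts L).image (x + ·) := by
  simp only [mem_image, not_exists, not_and]
  intro b hb
  have := pos_of_mem_cuts hpos hb
  omega

theorem le_of_mem_cuts_cons {L : List ℕ} {x a : ℕ}
    (ha : a ∈ cuts (x :: L)) : x ≤ a := by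
  simp only [cuts, mem_insert, mem_image] at ha
  rcases ha with rfl | ⟨b, -, rfl⟩ <;> omega

theorem cuts_injOn : Set.InjOn cuts {L | ∀ x ∈ L, 0 < x} := by
  intro L hL L' hL' h
  induction L generalizing L' with
  | nil =>
    cases L' with
    | nil => rfl
    | cons y L' => exact absurd h.symm (insert_ne_empty _ _)
  | cons x L ih =>
    cases L' with
    | nil => exact absurd h (insert_ne_empty _ _)
    | cons y L' =>
      have hL₀ : ∀ z ∈ L, 0 < z := fun z hz => hL z (by simp [hz])
      have hL₀' : ∀ z ∈ L', 0 < z := fun z hz => hL' z (by simp [hz])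
      have hx : x ∈ cuts (y :: L') := h ▸ mem_insert_self x _
      have hy : y ∈ cuts (x :: L) := h ▸ mem_insert_self y _
      have hxy : x = y := le_antisymm (le_of_mem_cuts_cons hy) (le_of_mem_cuts_cons hx)
      subst hxy
      have himage := congrArg (·.erase x) h
      simp only [cuts, erase_insert (head_notMem_image_cuts hL₀ x),
        erase_insert (head_notMem_image_cuts hL₀' x)] at himage
      rw [ih hL₀ hL₀' (image_injective (add_right_injective x) himage)]

theorem exists_append_of_mem_cuts {L : List ℕ} {a : ℕ} (h : a ∈ cuts L) :
    ∃ A B, A ≠ [] ∧ A ++ B = L ∧ A.sum = a := by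
  induction L generalizing a with
  | nil => simp [cuts] at h
  | cons x L ih =>
    simp only [cuts, mem_insert, mem_image] at h
    rcases h with rfl | ⟨b, hb, rfl⟩
    · exact ⟨[a], L, by simp, rfl, by simp⟩
    · obtain ⟨A, B, -, rfl, rfl⟩ := ih hb
      exact ⟨x :: A, B, by simp, rfl, by simp⟩

theorem cuts_append_subset_cuts_append_iff {A B A' B' : List ℕ}
    (hB : ∀ x ∈ B, 0 < x) (hB' : ∀ x ∈ B', 0 < x) (hsum : A.sum = A'.sum) :
    cuts (A ++ B) ⊆ cuts (A' ++ B') ↔ cuts A ⊆ cuts A' ∧ cuts B ⊆ cuts B' := by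
  rw [cuts_append, cuts_append, union_subset_iff, ← hsum]
  refine and_congr ⟨fun h a ha => ?_, fun h => h.trans subset_union_left⟩
    ⟨fun h b hb => ?_, fun h => (image_subset_image h).trans subset_union_right⟩
  · rcases mem_union.1 (h ha) with ha' | ha'
    · exact ha'
    · obtain ⟨b, hb, rfl⟩ := mem_image.1 ha'
      have := le_sum_of_mem_cuts ha
      have := pos_of_mem_cuts hB' hb
      omega
  · rcases mem_union.1 (h (mem_image_of_mem _ hb)) with hb' | hb'
    · have := le_sum_of_mem_cuts hb'
      have := pos_of_mem_cuts hB hb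
      omega
    · obtain ⟨b', hb', hbb'⟩ := mem_image.1 hb'
      rwa [← add_left_cancel hbb']

theorem cuts_map_sum_subset_cuts_flatten {P : List (List ℕ)} (hP : ∀ p ∈ P, p ≠ []) :
    cuts (P.map List.sum) ⊆ cuts P.flatten := by
  induction P with
  | nil => simp [cuts]
  | cons q P ih =>
    rw [List.map_cons, List.flatten_cons, cuts, cuts_append, insert_subset_iff]
    exact ⟨mem_union_left _ (sum_mem_cuts (hP q (by simp))),
      (image_subset_image (ih fun p hp => hP p (by simp [hp]))).trans subset_union_right⟩

theorem isCoarsening_of_cuts_subset {I J : List ℕ} (hI : ∀ x ∈ I, 0 < x)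
    (hJ : ∀ x ∈ J, 0 < x) (hsum : J.sum = I.sum) (h : cuts J ⊆ cuts I) :
    IsCoarsening I J := by
  induction J generalizing I with
  | nil =>
    obtain rfl := eq_nil_of_sum_eq_zero hI (by simpa using hsum.symm)
    exact ⟨[], by simp⟩
  | cons j J ih =>
    obtain ⟨A, B, hA, rfl, hAj⟩ := exists_append_of_mem_cuts (h (mem_insert_self j _))
    have hJ' : ∀ x ∈ J, 0 < x := fun x hx => hJ x (by simp [hx])
    have hB : ∀ x ∈ B, 0 < x := fun x hx => hI x (by simp [hx])
    rw [← List.singleton_append, cuts_append_subset_cuts_append_iff hJ' hB (by simp [hAj])] at h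
    obtain ⟨P, hP, rfl, rfl⟩ := ih hB hJ' (by simpa [hAj] using hsum) h.2
    exact ⟨A :: P, by simp_all⟩

theorem isCoarsening_iff_cuts_subset {I J : List ℕ} (hI : ∀ x ∈ I, 0 < x)
    (hJ : ∀ x ∈ J, 0 < x) (hsum : J.sum = I.sum) : IsCoarsening I J ↔ cuts J ⊆ cuts I := by
  refine ⟨?_, isCoarsening_of_cuts_subset hI hJ hsum⟩
  rintro ⟨P, hP, rfl, rfl⟩
  exact cuts_map_sum_subset_cuts_flatten hP

theorem mem_cuts_of_mem_compositionLists {n : ℕ} (hn : 0 < n) {J : List ℕ}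
    (hJ : J ∈ compositionLists n) : n ∈ cuts J := by
  obtain ⟨-, rfl⟩ := mem_compositionLists.1 hJ
  exact sum_mem_cuts (by rintro rfl; simp at hn)

theorem sum_compositionLists_eq_sum_powerset {M : Type*} [AddCommMonoid M] {n : ℕ} (hn : 0 < n)
    (f : Finset ℕ → M) :
    ∑ J ∈ compositionLists n, f ((cuts J).erase n) = ∑ D ∈ (Ioo 0 n).powerset, f D := by
  have hmaps : ∀ J ∈ compositionLists n, (cuts J).erase n ∈ (Ioo 0 n).powerset := by
    intro J hJ
    obtain ⟨hpos, rfl⟩ := mem_compositionLists.1 hJ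
    rw [mem_powerset]
    intro a ha
    have := pos_of_mem_cuts hpos (mem_of_mem_erase ha)
    have := le_sum_of_mem_cuts (mem_of_mem_erase ha)
    have := ne_of_mem_erase ha
    rw [mem_Ioo]
    omega
  have hinj : Set.InjOn (fun J => (cuts J).erase n) (compositionLists n) := by
    intro J hJ J' hJ' h
    refine cuts_injOn (mem_compositionLists.1 hJ).1 (mem_compositionLists.1 hJ').1 ?_
    rw [← insert_erase (mem_cuts_of_mem_compositionLists hn hJ),
      ← insert_erase (mem_cuts_of_mem_compositionLists hn hJ')]
    exact congrArg (insert n) h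
  refine sum_nbij _ hmaps hinj (surjOn_of_injOn_of_card_le _ hmaps hinj ?_) fun _ _ => rfl
  rw [card_powerset, Nat.card_Ioo, card_compositionLists, Nat.sub_zero]

theorem sum_neg_one_pow_length_of_cuts_subset {n : ℕ} (hn : 0 < n) {A : Finset ℕ}
    (hA : n ∈ A) :
    ∑ J ∈ compositionLists n, (if cuts J ⊆ A then (-1 : ℚ) ^ J.length else 0)
      = if Disjoint (Ioo 0 n) A then -1 else 0 := by
  have hterm : ∀ J ∈ compositionLists n, (if cuts J ⊆ A then (-1 : ℚ) ^ J.length else 0)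
      = -(if (cuts J).erase n ⊆ A then (-1 : ℚ) ^ #((cuts J).erase n) else 0) := by
    intro J hJ
    have hmem := mem_cuts_of_mem_compositionLists hn hJ
    have hlen : J.length = #((cuts J).erase n) + 1 := by
      rw [card_erase_add_one hmem, card_cuts (mem_compositionLists.1 hJ).1]
    have hsub : cuts J ⊆ A ↔ (cuts J).erase n ⊆ A :=
      ⟨(erase_subset n _).trans, fun h => insert_erase hmem ▸ insert_subset hA h⟩
    simp only [hsub, hlen, pow_succ]
    split_ifs <;> ring
  have hfilter : {D ∈ (Ioo 0 n).powerset | D ⊆ A} = (Ioo 0 n ∩ A).powerset := by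
    ext D
    simp only [mem_filter, mem_powerset, subset_inter_iff]
  have halt : ∑ D ∈ (Ioo 0 n ∩ A).powerset, (-1 : ℚ) ^ #D
      = if Ioo 0 n ∩ A = ∅ then 1 else 0 := by
    exact_mod_cast sum_powerset_neg_one_pow_card
  rw [sum_congr rfl hterm, sum_neg_distrib,
    sum_compositionLists_eq_sum_powerset hn fun D => if D ⊆ A then (-1 : ℚ) ^ #D else 0,
    ← sum_filter, hfilter, halt]
  simp only [disjoint_iff_inter_eq_empty]
  split_ifs <;> simp

theorem eq_of_append_eq_append_of_sum_eq {A B A' B' : List ℕ} (hA : ∀ x ∈ A, 0 < x)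
    (hA' : ∀ x ∈ A', 0 < x) (hsum : A.sum = A'.sum) (h : A ++ B = A' ++ B') : A = A' := by
  rcases List.append_eq_append_iff.1 h with ⟨C, rfl, -⟩ | ⟨C, rfl, -⟩
  · obtain rfl : C = [] :=
      eq_nil_of_sum_eq_zero (fun x hx => hA' x (by simp [hx])) (by simpa using hsum.symm)
    simp
  · obtain rfl : C = [] :=
      eq_nil_of_sum_eq_zero (fun x hx => hA x (by simp [hx])) (by simpa using hsum)
    simp

theorem sum_compositionLists_add {M : Type*} [AddCommMonoid M] {a : ℕ} (ha : 0 < a) (b : ℕ)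
    (f : List ℕ → M) :
    ∑ L ∈ compositionLists (a + b), (if a ∈ cuts L then f L else 0)
      = ∑ A ∈ compositionLists a, ∑ B ∈ compositionLists b, f (A ++ B) := by
  have himage : (compositionLists a ×ˢ compositionLists b).image (fun p => p.1 ++ p.2)
      = {L ∈ compositionLists (a + b) | a ∈ cuts L} := by
    ext L
    simp only [mem_image, mem_product, mem_filter, Prod.exists, mem_compositionLists]
    constructor
    · rintro ⟨A, B, ⟨⟨hA, rfl⟩, hB, rfl⟩, rfl⟩
      refine ⟨⟨fun x hx => ?_, List.sum_append⟩, ?_⟩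
      · rcases List.mem_append.1 hx with hx | hx
        exacts [hA x hx, hB x hx]
      · rw [cuts_append]
        exact mem_union_left _ (sum_mem_cuts (by rintro rfl; simp at ha))
    · rintro ⟨⟨hpos, hsum⟩, hcut⟩
      obtain ⟨A, B, -, rfl, rfl⟩ := exists_append_of_mem_cuts hcut
      exact ⟨A, B, ⟨⟨fun x hx => hpos x (by simp [hx]), rfl⟩,
        fun x hx => hpos x (by simp [hx]), by simpa using hsum⟩, rfl⟩
  rw [← sum_filter, ← himage, sum_image, sum_product]
  rintro ⟨A, B⟩ hp ⟨A', B'⟩ hp' h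
  simp only [coe_product, Set.mem_prod, mem_coe, mem_compositionLists] at hp hp' h
  obtain rfl := eq_of_append_eq_append_of_sum_eq hp.1.1 hp'.1.1 (hp.1.2.trans hp'.1.2.symm) h
  simp_all

def lamList (L : List ℕ) : NSym := (L.map Lam).prod

theorem lamList_append (A B : List ℕ) : lamList (A ++ B) = lamList A * lamList B := by
  simp [lamList]

theorem sc_eq_sum_lamList (m : ℕ) :
    Sc m = ∑ L ∈ compositionLists m, ((-1 : ℚ) ^ (m + L.length)) • lamList L := by
  induction m using Nat.strong_induction_on with
  | _ m ih =>
  rcases m with _ | m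
  · simp [compositionLists_zero, Sc, lamList]
  · rw [Sc, sum_compositionLists_succ_cons]
    refine sum_congr rfl fun k hk => ?_
    rw [ih (m - k) (by simp at hk; omega), mul_sum, smul_sum]
    refine sum_congr rfl fun J _ => ?_
    rw [mul_smul_comm, smul_smul, ← pow_add]
    congr 1
    exact neg_one_pow_congr (by simp only [Nat.even_iff, List.length_cons]; simp at hk; omega)

theorem prod_map_sc_eq_sum_lamList {J : List ℕ} (hJ : ∀ x ∈ J, 0 < x) :
    (J.map Sc).prod = ∑ L ∈ compositionLists J.sum,
      (if cuts J ⊆ cuts L then (-1 : ℚ) ^ (J.sum + L.length) else 0) • lamList L := by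
  induction J with
  | nil => simp [compositionLists_zero, cuts, lamList]
  | cons j J ih =>
    have hj : 0 < j := hJ j (by simp)
    have hJ' : ∀ x ∈ J, 0 < x := fun x hx => hJ x (by simp [hx])
    rw [List.map_cons, List.prod_cons, ih hJ', sc_eq_sum_lamList, sum_mul_sum, List.sum_cons]
    have hrestrict : ∀ L, (if cuts (j :: J) ⊆ cuts L
          then (-1 : ℚ) ^ (j + J.sum + L.length) else 0) • lamList L
        = if j ∈ cuts L then (if cuts ([j] ++ J) ⊆ cuts L
          then (-1 : ℚ) ^ (j + J.sum + L.length) else 0) • lamList L else 0 := by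
      intro L
      by_cases h : j ∈ cuts L
      · rw [if_pos h, List.singleton_append]
      · rw [if_neg h, if_neg fun hsub => h (hsub (mem_insert_self j _)), zero_smul]
    rw [sum_congr rfl fun L _ => hrestrict L, sum_compositionLists_add hj]
    refine sum_congr rfl fun A hA => sum_congr rfl fun B hB => ?_
    obtain ⟨hApos, rfl⟩ := mem_compositionLists.1 hA
    have hBpos := (mem_compositionLists.1 hB).1
    have hiff : cuts ([A.sum] ++ J) ⊆ cuts (A ++ B) ↔ cuts J ⊆ cuts B := by
      rw [cuts_append_subset_cuts_append_iff hJ' hBpos (by simp), cuts_singleton,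
        singleton_subset_iff,
        and_iff_right (sum_mem_cuts (by rintro rfl; simp at hj))]
    simp only [hiff, smul_mul_smul_comm, ← lamList_append]
    split_ifs
    · rw [← pow_add, List.length_append, add_add_add_comm]
    · simp

def ribbonCoeff (n : ℕ) (I L : List ℕ) : ℚ :=
  if Disjoint (Ioo 0 n) (cuts I ∩ cuts L) then -(-1) ^ (I.length + n + L.length) else 0

theorem rib_eq_sum_lamList {n : ℕ} (hn : 0 < n) (I : Composition n) :
    Rib I = ∑ L ∈ compositionLists n, ribbonCoeff n I.blocks L • lamList L := by
  have hI : I.blocks ∈ compositionLists n := mem_map_of_mem _ (mem_univ I)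
  have hterm : ∀ J ∈ compositionLists n,
      (if IsCoarsening I.blocks J then ((-1 : ℚ) ^ (I.length - J.length)) • (J.map Sc).prod
        else 0) = ∑ L ∈ compositionLists n, ((-1 : ℚ) ^ (I.length + n + L.length) *
            if cuts J ⊆ cuts I.blocks ∩ cuts L then (-1) ^ J.length else 0) • lamList L := by
    intro J hJ
    obtain ⟨hJpos, hJsum⟩ := mem_compositionLists.1 hJ
    rw [isCoarsening_iff_cuts_subset (fun _ => I.blocks_pos) hJpos (by simp [hJsum])]
    split_ifs with hJI
    · have hlen : J.length ≤ I.length := by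
        rw [← card_cuts hJpos, ← I.blocks_length, ← card_cuts fun _ => I.blocks_pos]
        exact card_le_card hJI
      rw [prod_map_sc_eq_sum_lamList hJpos, hJsum, smul_sum]
      refine sum_congr rfl fun L _ => ?_
      simp only [subset_inter_iff, hJI, true_and, smul_smul, mul_ite, mul_zero]
      split_ifs
      · rw [← pow_add, ← pow_add]
        exact congrArg (· • _) (neg_one_pow_congr (by simp only [Nat.even_iff]; omega))
      · rfl
    · symm
      refine sum_eq_zero fun L _ => ?_
      rw [if_neg fun h => hJI (h.trans inter_subset_left), mul_zero, zero_smul]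
  have hrib : Rib I = ∑ J ∈ compositionLists n, (if IsCoarsening I.blocks J
      then ((-1 : ℚ) ^ (I.length - J.length)) • (J.map Sc).prod else 0) := by
    rw [sum_compositionLists]; rfl
  rw [hrib, sum_congr rfl hterm, sum_comm]
  refine sum_congr rfl fun L hL => ?_
  have hn_mem : n ∈ cuts I.blocks ∩ cuts L :=
    mem_inter.2 ⟨mem_cuts_of_mem_compositionLists hn hI, mem_cuts_of_mem_compositionLists hn hL⟩
  rw [← sum_smul, ← mul_sum, sum_neg_one_pow_length_of_cuts_subset hn hn_mem]
  unfold ribbonCoeff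
  split_ifs <;> simp

def partWeight : ℕ → ℚ
  | 1 => -2
  | 2 => -1
  | _ => 0

theorem prod_map_partWeight (I : List ℕ) :
    (I.map partWeight).prod
      = if ∀ i ∈ I, i = 1 ∨ i = 2 then (-1 : ℚ) ^ I.length * 2 ^ I.count 1 else 0 := by
  induction I with
  | nil => simp
  | cons i I ih =>
    rw [List.map_cons, List.prod_cons, ih]
    rcases i with _ | _ | _ | i
    all_goals simp [partWeight, pow_succ]
    split_ifs <;> ring

/-- The signed weight `∑ (-1)^ℓ(J) 2^{m₁(J)}` over the compositions `J` of `m` into parts `1`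
and `2` with no partial sum in `F`. -/
def avoidingSum (F : Finset ℕ) (m : ℕ) : ℚ :=
  ∑ J ∈ compositionLists m, if Disjoint (cuts J) F then (J.map partWeight).prod else 0

theorem avoidingSum_zero (F : Finset ℕ) : avoidingSum F 0 = 1 := by
  simp [avoidingSum, compositionLists_zero, cuts]

theorem avoidingSum_succ (F : Finset ℕ) (m : ℕ) :
    avoidingSum F (m + 1) = if m + 1 ∈ F then 0
      else ∑ k ∈ range (m + 1), partWeight (k + 1) * avoidingSum F (m - k) := by
  have hcuts : ∀ k ∈ range (m + 1), ∀ J ∈ compositionLists (m - k),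
      cuts (J ++ [k + 1]) = insert (m + 1) (cuts J) := by
    intro k hk J hJ
    rw [cuts_append_singleton, (mem_compositionLists.1 hJ).2]
    congr 1
    simp at hk
    omega
  rw [avoidingSum, sum_compositionLists_succ_append]
  split_ifs with hF
  · refine sum_eq_zero fun k hk => sum_eq_zero fun J hJ => if_neg ?_
    rw [hcuts k hk J hJ, disjoint_insert_left]
    exact fun h => h.1 hF
  · refine sum_congr rfl fun k hk => ?_
    rw [avoidingSum, mul_sum]
    refine sum_congr rfl fun J hJ => ?_
    rw [hcuts k hk J hJ]
    simp [hF, mul_comm]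

theorem avoidingSum_of_mem {F : Finset ℕ} {m : ℕ} (hm : 0 < m) (h : m ∈ F) :
    avoidingSum F m = 0 := by
  obtain ⟨m, rfl⟩ : ∃ k, m = k + 1 := ⟨m - 1, by omega⟩
  rw [avoidingSum_succ, if_pos h]

theorem avoidingSum_one {F : Finset ℕ} (h : 1 ∉ F) : avoidingSum F 1 = -2 := by
  simp [avoidingSum_succ, h, avoidingSum_zero, partWeight]

theorem avoidingSum_add_two {F : Finset ℕ} {m : ℕ} (h : m + 2 ∉ F) :
    avoidingSum F (m + 2) = -2 * avoidingSum F (m + 1) - avoidingSum F m := by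
  rw [avoidingSum_succ, if_neg h, sum_range_succ', sum_range_succ']
  simp [partWeight]
  ring

theorem avoidingSum_insert_of_lt {F : Finset ℕ} {m a : ℕ} (h : m < a) :
    avoidingSum (insert a F) m = avoidingSum F m := by
  refine sum_congr rfl fun J hJ => ?_
  have : a ∉ cuts J := fun ha => by
    have := le_sum_of_mem_cuts ha
    rw [(mem_compositionLists.1 hJ).2] at this
    omega
  simp [disjoint_insert_right, this]

/-- The characteristic polynomial of the recurrence is `(X + 1)²`. -/
theorem eq_of_recurrence_neg_two_neg_one {u : ℕ → ℚ} {a i : ℕ}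
    (h : ∀ j, j + 2 ≤ i → u (a + j + 2) = -2 * u (a + j + 1) - u (a + j)) :
    u (a + i) = (-1) ^ i * ((1 - i) * u a - i * u (a + 1)) := by
  induction i using Nat.strong_induction_on with
  | _ i ih =>
  match i, ih, h with
  | 0, _, _ => simp
  | 1, _, _ => simp
  | i + 2, ih, h =>
    rw [← add_assoc, h i le_rfl, add_assoc, ih (i + 1) (by omega) fun j hj => h j (by omega),
      ih i (by omega) fun j hj => h j (by omega)]
    push_cast
    ring

def lamCoeff (L : List ℕ) : ℕ := L.headI * (L.tail.map fun i => i - 1).prod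

theorem lamCoeff_append_singleton {M : List ℕ} (hM : M ≠ []) (k : ℕ) :
    lamCoeff (M ++ [k]) = lamCoeff M * (k - 1) := by
  obtain ⟨x, M, rfl⟩ := List.exists_cons_of_ne_nil hM
  simp [lamCoeff, mul_assoc]

theorem avoidingSum_singleton_sub_one {k : ℕ} (hk : 0 < k) :
    avoidingSum {k} (k - 1) = (-1) ^ (k + 1) * k := by
  obtain ⟨j, rfl⟩ : ∃ j, k = j + 1 := ⟨k - 1, by omega⟩
  have hrec := eq_of_recurrence_neg_two_neg_one (u := avoidingSum {j + 1}) (a := 0) (i := j)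
    fun i hi => avoidingSum_add_two (by simp; omega)
  have hW1 : (j : ℚ) * avoidingSum {j + 1} 1 = -2 * j := by
    rcases j with _ | j
    · simp
    · rw [avoidingSum_one (by simp), mul_comm]
  rw [zero_add, zero_add, avoidingSum_zero] at hrec
  rw [Nat.add_sub_cancel, hrec]
  push_cast
  linear_combination (-(-1 : ℚ) ^ j) * hW1

/-- Between the cut at `M.sum`, where the sum vanishes, and the next one the recurrence runs
freely. -/
theorem avoidingSum_cuts_append_singleton {M : List ℕ} (hM : M ≠ [])
    (hMpos : ∀ x ∈ M, 0 < x) {k : ℕ} (hk : 0 < k) :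
    avoidingSum (cuts (M ++ [k])) (M.sum + k - 1)
      = (-1) ^ (k + 1) * (k - 1 : ℕ) * avoidingSum (cuts M) (M.sum - 1) := by
  set S := M.sum
  have hS : 0 < S := pos_of_mem_cuts hMpos (sum_mem_cuts hM)
  have hF : cuts (M ++ [k]) = insert (S + k) (cuts M) := cuts_append_singleton M k
  have hprev : avoidingSum (cuts (M ++ [k])) (S - 1) = avoidingSum (cuts M) (S - 1) := by
    rw [hF, avoidingSum_insert_of_lt (by omega)]
  have hzero : avoidingSum (cuts (M ++ [k])) S = 0 :=
    avoidingSum_of_mem hS (hF ▸ mem_insert_of_mem (sum_mem_cuts hM))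
  have hrec := eq_of_recurrence_neg_two_neg_one (u := avoidingSum (cuts (M ++ [k])))
    (a := S - 1) (i := k) fun j hj => avoidingSum_add_two fun hmem => by
      rw [hF, mem_insert] at hmem
      rcases hmem with h | h
      · omega
      · have := le_sum_of_mem_cuts h
        omega
  rw [Nat.sub_add_cancel hS, hprev, hzero] at hrec
  rw [show S + k - 1 = S - 1 + k by omega, hrec]
  push_cast [Nat.cast_sub hk]
  ring

theorem avoidingSum_cuts_sum_sub_one {L : List ℕ} (hL : L ≠ []) (hpos : ∀ x ∈ L, 0 < x) :
    avoidingSum (cuts L) (L.sum - 1) = (-1) ^ (L.sum + L.length) * lamCoeff L := by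
  induction L using List.reverseRecOn with
  | nil => exact absurd rfl hL
  | append_singleton M k ih =>
    have hk : 0 < k := hpos k (by simp)
    rcases eq_or_ne M [] with rfl | hM
    · simp [cuts_singleton, avoidingSum_singleton_sub_one hk, lamCoeff]
    · have hMpos : ∀ x ∈ M, 0 < x := fun x hx => hpos x (by simp [hx])
      rw [List.sum_append, List.sum_singleton, avoidingSum_cuts_append_singleton hM hMpos hk,
        ih hM hMpos, lamCoeff_append_singleton hM, List.length_append, List.length_singleton]
      push_cast
      ring

theorem sum_getLast_eq_one_eq_avoidingSum {n : ℕ} (hn : 0 < n) (F : Finset ℕ) :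
    ∑ I ∈ compositionLists n, (if (∀ i ∈ I, i = 1 ∨ i = 2) ∧ I.getLast? = some 1 ∧
        Disjoint (Ioo 0 n) (cuts I ∩ F) then (-1 : ℚ) ^ I.length * 2 ^ I.count 1 else 0)
      = -2 * avoidingSum F (n - 1) := by
  obtain ⟨m, rfl⟩ : ∃ m, n = m + 1 := ⟨n - 1, by omega⟩
  rw [sum_compositionLists_succ_append, sum_range_succ', sum_eq_zero fun k _ =>
    sum_eq_zero fun J _ => if_neg fun h => by simpa using h.2.1, zero_add, Nat.add_sub_cancel,
    avoidingSum, mul_sum]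
  refine sum_congr rfl fun J hJ => ?_
  obtain ⟨hpos, rfl⟩ := mem_compositionLists.1 hJ
  have hdisj : Disjoint (Ioo 0 (J.sum + 1)) (cuts (J ++ [0 + 1]) ∩ F) ↔
      Disjoint (cuts J) F := by
    simp only [cuts_append_singleton, disjoint_left, mem_Ioo, mem_inter, mem_insert]
    constructor
    · intro h a ha haF
      exact h ⟨pos_of_mem_cuts hpos ha, Nat.lt_succ_of_le (le_sum_of_mem_cuts ha)⟩
        ⟨Or.inr ha, haF⟩
    · rintro h a ⟨-, hlt⟩ ⟨rfl | ha, haF⟩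
      · omega
      · exact h ha haF
  simp only [hdisj, prod_map_partWeight, List.forall_mem_append, List.getLast?_concat,
    List.length_append, List.count_append]
  split_ifs <;> simp_all [pow_succ, mul_comm, mul_left_comm]

theorem sum_ribbonCoeff {n : ℕ} (hn : 0 < n) {L : List ℕ} (hL : L ∈ compositionLists n) :
    ∑ I ∈ compositionLists n, (if (∀ i ∈ I, i = 1 ∨ i = 2) ∧ I.getLast? = some 1
      then (2 : ℚ) ^ I.count 1 * ribbonCoeff n I L else 0) = 2 * lamCoeff L := by
  have hterm : ∀ I : List ℕ, (if (∀ i ∈ I, i = 1 ∨ i = 2) ∧ I.getLast? = some 1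
      then (2 : ℚ) ^ I.count 1 * ribbonCoeff n I L else 0)
      = -(-1) ^ (n + L.length) * (if (∀ i ∈ I, i = 1 ∨ i = 2) ∧ I.getLast? = some 1 ∧
        Disjoint (Ioo 0 n) (cuts I ∩ cuts L)
          then (-1 : ℚ) ^ I.length * 2 ^ I.count 1 else 0) := by
    intro I
    unfold ribbonCoeff
    split_ifs <;> simp_all [pow_add]
    ring
  obtain ⟨hpos, rfl⟩ := mem_compositionLists.1 hL
  rw [sum_congr rfl fun I _ => hterm I, ← mul_sum, sum_getLast_eq_one_eq_avoidingSum hn,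
    avoidingSum_cuts_sum_sub_one (by rintro rfl; simp at hn) hpos]
  have hsq : (-1 : ℚ) ^ (L.sum + L.length) * (-1) ^ (L.sum + L.length) = 1 := by
    rw [← mul_pow]; norm_num
  linear_combination (2 * (lamCoeff L : ℚ)) * hsq

/-- In `NSym`, for every `n ≥ 1`:
`2 · ∑_{I ⊨ n} i₁(i₂−1)⋯(i_l−1) Λ^I = ∑_{I ∈ 𝒞_n} 2^{m₁(I)} R_I`,
where `𝒞_n` is the set of compositions of `n` all of whose parts are `1` or `2`
and whose last part is `1`, and `m₁(I)` is the number of parts of `I` equal to `1`. -/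
theorem two_smul_sum_coeff_lam_eq_sum_ribbon (n : ℕ) (hn : 1 ≤ n) :
    (2 : ℚ) • ∑ I : Composition n,
        ((I.blocks.headI * ((I.blocks.tail).map (fun i => i - 1)).prod : ℕ) : ℚ) • LamProd I
      = ∑ I ∈ Finset.univ.filter
            (fun I : Composition n =>
              (∀ i ∈ I.blocks, i = 1 ∨ i = 2) ∧ I.blocks.getLast? = some 1),
          ((2 : ℚ) ^ (I.blocks.count 1)) • Rib I := by
  calc _ = ∑ L ∈ compositionLists n, (2 * lamCoeff L : ℚ) • lamList L := by
        rw [sum_compositionLists, smul_sum]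
        simp_rw [smul_smul]
        rfl
    _ = ∑ L ∈ compositionLists n, (∑ I ∈ compositionLists n,
          if (∀ i ∈ I, i = 1 ∨ i = 2) ∧ I.getLast? = some 1
          then (2 : ℚ) ^ I.count 1 * ribbonCoeff n I L else 0) • lamList L :=
        sum_congr rfl fun L hL => by rw [sum_ribbonCoeff hn hL]
    _ = _ := by
        simp_rw [sum_smul]
        rw [sum_comm, sum_compositionLists, sum_filter]
        refine sum_congr rfl fun I _ => ?_
        split_ifs <;> simp [rib_eq_sum_lamList hn, smul_sum, smul_smul]

end
end

section
/- For all integers n ≥ 1 and N ≥ 1, the chromatic symmetric polynomial of the path on n vertices satisfies X_{P_n}^{(N)} = Σ_{I = (i_1, …, i_l) ⊨ n} i_1·(i_2 − 1)⋯(i_l − 1) · e_{i_1} e_{i_2} ⋯ e_{i_l}, the sum ranging over all compositions I of n. -/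
/-!
Write `E(t) = ∏ᵢ (1 + xᵢ t) = ∑ₖ eₖ tᵏ` and `P(t) = ∑ₙ X_{Pₙ} tⁿ`. Sorting the colourings of a
path by the colour `j` of its first vertex, their generating function `H_j` satisfies
`(1 + x_j t) H_j = x_j t P`: the rest of the path is a coloured path whose first colour is not `j`.
Multiplying by `∏_{i ≠ j} (1 + xᵢ t)` and summing over `j` gives `E (P - 1) = t E' P`, that is
`P - 1 = A + B (P - 1)` with `A = ∑ k eₖ tᵏ` and `B = ∑ (k - 1) eₖ tᵏ`. Removing the last block of
a composition shows that the generating function of the composition sum solves the same equation,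
and the solution is unique because `B` has no constant term.
-/

open scoped Classical

noncomputable section

/-- The chromatic symmetric polynomial `X_G^{(N)} ∈ ℤ[x₁,…,x_N]` of a finite simple graph `G`:
the sum over all proper colorings `c : V → {1,…,N}` of the monomials `∏_{v ∈ V} x_{c v}`. -/
def chromPoly (N : ℕ) {V : Type} [Fintype V] [DecidableEq V] (G : SimpleGraph V) :
    MvPolynomial (Fin N) ℤ :=
  ∑ c ∈ Finset.univ.filter (fun c : V → Fin N => ∀ u v, G.Adj u v → c u ≠ c v),
    ∏ v, MvPolynomial.X (c v)

open Finset PowerSeries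

theorem Derivation.leibniz_prod {R A M : Type*} [CommSemiring R] [CommSemiring A]
    [AddCommMonoid M] [Algebra R A] [Module A M] [Module R M] (D : Derivation R A M)
    {ι : Type*} [DecidableEq ι] (s : Finset ι) (f : ι → A) :
    D (∏ i ∈ s, f i) = ∑ i ∈ s, (∏ j ∈ s.erase i, f j) • D (f i) := by
  induction s using Finset.induction_on with
  | empty => simp
  | insert a s ha ih =>
    rw [prod_insert ha, D.leibniz, ih, sum_insert ha, erase_insert ha, smul_sum, add_comm]
    congr 1
    refine sum_congr rfl fun i hi => ?_
    rw [erase_insert_of_ne (ne_of_mem_of_not_mem hi ha).symm, prod_insert (by simp [ha]), mul_smul]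

namespace PowerSeries

section CommSemiring

variable {R : Type*} [CommSemiring R]

theorem X_mul_derivative_eq_mk (f : R⟦X⟧) : X * d⁄dX R f = mk fun n => n • coeff n f := by
  ext (_ | n)
  · simp
  · rw [coeff_succ_X_mul, coeff_derivative, coeff_mk, nsmul_eq_mul, mul_comm]; push_cast; rfl

theorem coeff_prod_one_add_C_mul_X {σ : Type*} (s : Finset σ) (x : σ → R) (k : ℕ) :
    coeff k (∏ i ∈ s, (1 + C (x i) * X)) = (s.val.map x).esymm k := by
  simp_rw [prod_one_add, prod_mul_distrib, prod_const, ← map_prod, map_sum, coeff_C_mul_X_pow,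
    sum_ite, sum_const_zero, add_zero, Finset.esymm_map_val, powersetCard_eq_filter, eq_comm]

theorem X_mul_derivative_prod_one_add_C_mul_X {σ : Type*} [DecidableEq σ] (s : Finset σ)
    (x : σ → R) :
    X * d⁄dX R (∏ i ∈ s, (1 + C (x i) * X)) =
      ∑ i ∈ s, (∏ j ∈ s.erase i, (1 + C (x j) * X)) * (C (x i) * X) := by
  rw [Derivation.leibniz_prod, mul_sum]
  refine sum_congr rfl fun i _ => ?_
  simp only [map_add, derivative_one, Derivation.leibniz, derivative_C, derivative_X, smul_eq_mul]
  ring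

theorem prod_one_add_C_mul_X_eq_mk_esymm (σ : Type*) [Fintype σ] :
    ∏ i : σ, (1 + C (MvPolynomial.X i : MvPolynomial σ R) * X) =
      mk (MvPolynomial.esymm σ R) := by
  ext k
  rw [coeff_prod_one_add_C_mul_X, coeff_mk, MvPolynomial.esymm_eq_multiset_esymm]

end CommSemiring

section CommRing

variable {R : Type*} [CommRing R]

theorem eq_of_eq_add_mul_self {A B F G : R⟦X⟧}
    (hB : constantCoeff B = 0) (hF : F = A + B * F) (hG : G = A + B * G) : F = G := by
  have hunit : IsUnit (1 - B) := isUnit_iff_constantCoeff.2 (by simp [hB])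
  rw [← sub_eq_zero, ← hunit.mul_right_eq_zero]
  linear_combination hF - hG

theorem mk_sub_one_nsmul (e : ℕ → R) (he : e 0 = 1) :
    mk (fun n => (n - 1) • e n) = mk (fun n => n • e n) - mk e + 1 := by
  ext (_ | n)
  · simp [he]
  · simp [coeff_one]
    ring

end CommRing

end PowerSeries

namespace Composition

theorem sum_succ_eq_sum_antidiagonal {M : Type*} [AddCommMonoid M] (n : ℕ) (φ : List ℕ → M) :
    ∑ I : Composition (n + 1), φ I.blocks =
      ∑ p ∈ antidiagonal n, ∑ J : Composition p.2, φ (J.blocks ++ [p.1 + 1]) := by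
  have hne (I : Composition (n + 1)) : I.blocks ≠ [] := by simp
  set last := fun I : Composition (n + 1) => I.blocks.getLast (hne I)
  have hsplit (I : Composition (n + 1)) : I.blocks.dropLast ++ [last I] = I.blocks :=
    List.dropLast_concat_getLast (hne I)
  have hsum (I : Composition (n + 1)) : I.blocks.dropLast.sum + last I = n + 1 := by
    simpa [I.blocks_sum] using congrArg List.sum (hsplit I)
  have hpos (I : Composition (n + 1)) : 0 < last I := I.blocks_pos (List.getLast_mem _)
  rw [← sum_fiberwise_of_maps_to (g := fun I => (last I - 1, n + 1 - last I))
    (t := antidiagonal n) fun I _ => by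
      have := hsum I; have := hpos I; rw [HasAntidiagonal.mem_antidiagonal]; omega]
  refine sum_congr rfl fun p hp => ?_
  rw [HasAntidiagonal.mem_antidiagonal] at hp
  have hlast (I) (hI : I ∈ univ.filter fun I => (last I - 1, n + 1 - last I) = p) :
      last I = p.1 + 1 := by
    have := hpos I; simp only [mem_filter, Prod.ext_iff] at hI; omega
  refine sum_bij'
    (fun I hI => ⟨I.blocks.dropLast, fun hi => I.blocks_pos (List.dropLast_subset _ hi), by
      have := hsum I; have := hlast I hI; omega⟩)
    (fun J _ => ⟨J.blocks ++ [p.1 + 1], by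
      simp only [List.mem_append, List.mem_singleton]
      rintro i (hi | rfl)
      exacts [J.blocks_pos hi, Nat.succ_pos _], by simp; omega⟩)
    (fun _ _ => mem_univ _) (fun J _ => ?_) (fun I hI => ?_) (fun J _ => ?_) (fun I hI => ?_)
  · simp [last, Prod.ext_iff]; omega
  · exact Composition.ext (by simp [← hlast I hI, hsplit])
  · exact Composition.ext List.dropLast_concat
  · simp [← hlast I hI, hsplit]

theorem sum_ite_blocks_eq_nil {M : Type*} [AddCommMonoid M] (n : ℕ) (a : M) :
    ∑ I : Composition n, (if I.blocks = [] then a else 0) = if n = 0 then a else 0 := by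
  simp only [blocks_eq_nil, sum_const, card_univ, composition_card, smul_ite, smul_zero]
  split_ifs with h <;> simp [h]

end Composition

section CompositionSeries

variable {R : Type*} [CommSemiring R]

def compositionWeight (e : ℕ → R) (l : List ℕ) : R :=
  (l.headI * (l.tail.map (· - 1)).prod) • (l.map e).prod

theorem compositionWeight_append_singleton (e : ℕ → R) (l : List ℕ) (a : ℕ) :
    compositionWeight e (l ++ [a]) =
      (a - 1) • e a * compositionWeight e l + if l = [] then a • e a else 0 := by
  cases l with
  | nil => simp [compositionWeight]
  | cons b t =>
    simp only [compositionWeight, List.cons_append, List.headI_cons, List.tail_cons,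
      List.map_append, List.prod_append, List.map_cons, List.map_nil, List.prod_cons,
      List.prod_nil, reduceCtorEq, if_false, add_zero, nsmul_eq_mul]
    push_cast
    ring

def compositionSeries (e : ℕ → R) : R⟦X⟧ :=
  mk fun n => ∑ I : Composition n, compositionWeight e I.blocks

theorem compositionSeries_eq (e : ℕ → R) :
    compositionSeries e =
      mk (fun n => n • e n) + mk (fun n => (n - 1) • e n) * compositionSeries e := by
  ext (_ | n)
  · have hnil (I : Composition 0) : I.blocks = [] := (Composition.blocks_eq_nil I).2 rfl
    simp [compositionSeries, compositionWeight, hnil]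
  · have hsingle : ∑ p ∈ antidiagonal n, (if p.2 = 0 then (p.1 + 1) • e (p.1 + 1) else 0) =
        (n + 1) • e (n + 1) := by
      rw [sum_eq_single (n, 0)] <;> aesop
    simp only [compositionSeries, coeff_mk, map_add, coeff_mul, Nat.sum_antidiagonal_succ,
      Composition.sum_succ_eq_sum_antidiagonal, compositionWeight_append_singleton,
      sum_add_distrib, ← mul_sum, Composition.sum_ite_blocks_eq_nil, hsingle]
    simp [add_comm]

end CompositionSeries

theorem SimpleGraph.pathGraph_succ_forall_adj_ne_iff {α : Type*} {n : ℕ} (c : Fin (n + 1) → α) :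
    (∀ u v, (pathGraph (n + 1)).Adj u v → c u ≠ c v) ↔ ∀ i : Fin n, c i.castSucc ≠ c i.succ := by
  refine ⟨fun h i => h _ _ (by simp [pathGraph_adj]), fun h u v huv => ?_⟩
  rcases pathGraph_adj.1 huv with huv | huv
  · convert h ⟨u, by omega⟩ <;> ext <;> simp [huv]
  · convert (h ⟨v, by omega⟩).symm <;> ext <;> simp [huv]

section PathColorings

variable {N : ℕ}

def pathChromPolyFrom (N n : ℕ) (j : Fin N) : MvPolynomial (Fin N) ℤ :=
  ∑ c ∈ univ.filter (fun c : Fin (n + 1) → Fin N =>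
      (∀ i : Fin n, c i.castSucc ≠ c i.succ) ∧ c 0 = j),
    ∏ v, MvPolynomial.X (c v)

theorem chromPoly_pathGraph_zero : chromPoly N (SimpleGraph.pathGraph 0) = 1 := by
  simp [chromPoly]

theorem chromPoly_pathGraph_succ (n : ℕ) :
    chromPoly N (SimpleGraph.pathGraph (n + 1)) = ∑ j, pathChromPolyFrom N n j := by
  rw [chromPoly, ← sum_fiberwise _ (fun c => c 0)]
  refine sum_congr rfl fun j _ => sum_congr ?_ fun _ _ => rfl
  ext c
  simp [SimpleGraph.pathGraph_succ_forall_adj_ne_iff]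

theorem pathChromPolyFrom_zero (j : Fin N) : pathChromPolyFrom N 0 j = MvPolynomial.X j := by
  have hconst : univ.filter (fun c : Fin 1 → Fin N => c 0 = j) = {fun _ => j} := by
    ext c; simp [funext_iff, Fin.forall_fin_one]
  simp [pathChromPolyFrom, hconst]

theorem Fin.forall_castSucc_ne_succ_cons_iff {α : Type*} {n : ℕ} (a : α) (d : Fin (n + 1) → α) :
    (∀ i : Fin (n + 1),
      (Fin.cons a d : Fin (n + 2) → α) i.castSucc ≠ (Fin.cons a d : Fin (n + 2) → α) i.succ) ↔
      (∀ i : Fin n, d i.castSucc ≠ d i.succ) ∧ d 0 ≠ a := by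
  simp [Fin.forall_fin_succ, and_comm, ne_comm]

theorem pathChromPolyFrom_succ (n : ℕ) (j : Fin N) :
    pathChromPolyFrom N (n + 1) j =
      MvPolynomial.X j * ∑ i ∈ univ.erase j, pathChromPolyFrom N n i := by
  have hcons : pathChromPolyFrom N (n + 1) j =
      ∑ d ∈ univ.filter (fun d : Fin (n + 1) → Fin N =>
        (∀ i : Fin n, d i.castSucc ≠ d i.succ) ∧ d 0 ≠ j),
        MvPolynomial.X j * ∏ v, MvPolynomial.X (d v) := by
    refine sum_nbij' Fin.tail (fun d => (Fin.cons j d : Fin (n + 2) → Fin N))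
      (fun c hc => ?_) (fun d hd => ?_) (fun c hc => ?_) (fun d _ => Fin.tail_cons _ _)
      (fun c hc => ?_)
    · simp only [mem_filter, mem_univ, true_and] at hc ⊢
      rw [← hc.2, ← Fin.forall_castSucc_ne_succ_cons_iff, Fin.cons_self_tail]
      exact hc.1
    · simp only [mem_filter, mem_univ, true_and] at hd ⊢
      exact ⟨(Fin.forall_castSucc_ne_succ_cons_iff j d).2 hd, Fin.cons_zero _ _⟩
    · simp only [mem_filter, mem_univ, true_and] at hc
      rw [← hc.2, Fin.cons_self_tail]
    · simp only [mem_filter, mem_univ, true_and] at hc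
      rw [Fin.prod_univ_succ, hc.2]; rfl
  rw [hcons, ← mul_sum, ← sum_fiberwise_of_maps_to (g := fun d => d 0) (t := univ.erase j)
    (fun d hd => by simp_all)]
  refine congrArg _ (sum_congr rfl fun i hi => sum_congr ?_ fun _ _ => rfl)
  ext d
  simp only [mem_filter, mem_univ, true_and]
  grind

def pathSeries (N : ℕ) : (MvPolynomial (Fin N) ℤ)⟦X⟧ :=
  PowerSeries.mk fun n => chromPoly N (SimpleGraph.pathGraph n)

/-- The coefficient of `tⁿ` is the part of `X_{Pₙ}` whose colourings give colour `j` to the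
first vertex. -/
def pathSeriesFrom (N : ℕ) (j : Fin N) : (MvPolynomial (Fin N) ℤ)⟦X⟧ :=
  X * PowerSeries.mk fun n => pathChromPolyFrom N n j

theorem pathSeries_eq_one_add_sum : pathSeries N = 1 + ∑ j, pathSeriesFrom N j := by
  ext (_ | n)
  · simp [pathSeries, pathSeriesFrom, chromPoly_pathGraph_zero]
  · simp [pathSeries, pathSeriesFrom, coeff_one, chromPoly_pathGraph_succ, map_sum]

theorem one_add_C_mul_X_mul_pathSeriesFrom (j : Fin N) :
    (1 + C (MvPolynomial.X j) * X) * pathSeriesFrom N j =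
      C (MvPolynomial.X j) * X * pathSeries N := by
  have hrec (n : ℕ) : pathChromPolyFrom N (n + 1) j + MvPolynomial.X j * pathChromPolyFrom N n j =
      MvPolynomial.X j * chromPoly N (SimpleGraph.pathGraph (n + 1)) := by
    rw [pathChromPolyFrom_succ, chromPoly_pathGraph_succ, ← sum_erase_add _ _ (mem_univ j),
      mul_add]
  rw [pathSeriesFrom, mul_left_comm, mul_comm (C _) X, mul_assoc]
  refine congrArg (X * ·) (PowerSeries.ext fun n => ?_)
  rcases n with _ | n
  · simp [pathSeries, pathChromPolyFrom_zero, chromPoly_pathGraph_zero]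
  · simp [add_mul, mul_assoc, coeff_succ_X_mul, pathSeries, hrec]

theorem prod_mul_pathSeries_sub_one :
    (∏ i, (1 + C (MvPolynomial.X i) * X)) * (pathSeries N - 1) =
      X * d⁄dX _ (∏ i, (1 + C (MvPolynomial.X i) * X)) * pathSeries N := by
  rw [X_mul_derivative_prod_one_add_C_mul_X, pathSeries_eq_one_add_sum, add_sub_cancel_left,
    mul_sum, sum_mul]
  refine sum_congr rfl fun j _ => ?_
  rw [← mul_prod_erase univ _ (mem_univ j), mul_right_comm, one_add_C_mul_X_mul_pathSeriesFrom,
    ← pathSeries_eq_one_add_sum]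
  ring

theorem pathSeries_sub_one_eq_compositionSeries :
    pathSeries N - 1 = compositionSeries (MvPolynomial.esymm (Fin N) ℤ) := by
  have hE := prod_one_add_C_mul_X_eq_mk_esymm (R := ℤ) (Fin N)
  have hB := mk_sub_one_nsmul _ (MvPolynomial.esymm_zero (Fin N) ℤ)
  have key := prod_mul_pathSeries_sub_one (N := N)
  rw [hE, X_mul_derivative_eq_mk] at key
  simp only [coeff_mk] at key
  refine eq_of_eq_add_mul_self (by simp) ?_ (compositionSeries_eq _)
  rw [hB]
  linear_combination key

end PathColorings

theorem chromPoly_pathGraph_eq_sum_esymm_general (n N : ℕ) (hn : 1 ≤ n) :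
    chromPoly N (SimpleGraph.pathGraph n)
      = ∑ I : Composition n,
          (I.blocks.headI * ((I.blocks.tail).map (fun i => i - 1)).prod) •
            (I.blocks.map (fun k => MvPolynomial.esymm (Fin N) ℤ k)).prod := by
  have h := congrArg (coeff n) (pathSeries_sub_one_eq_compositionSeries (N := N))
  simpa [pathSeries, compositionSeries, compositionWeight, coeff_one,
    Nat.one_le_iff_ne_zero.1 hn] using h

/-- For all `n ≥ 1` and `N ≥ 1`, the chromatic symmetric polynomial of the path on `n`
vertices equals `∑_{I=(i₁,…,i_l) ⊨ n} i₁(i₂−1)⋯(i_l−1) e_{i₁} e_{i₂} ⋯ e_{i_l}`. -/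
theorem chromPoly_pathGraph_eq_sum_esymm (n N : ℕ) (hn : 1 ≤ n) (hN : 1 ≤ N) :
    chromPoly N (SimpleGraph.pathGraph n)
      = ∑ I : Composition n,
          (I.blocks.headI * ((I.blocks.tail).map (fun i => i - 1)).prod) •
            (I.blocks.map (fun k => MvPolynomial.esymm (Fin N) ℤ k)).prod :=
  chromPoly_pathGraph_eq_sum_esymm_general n N hn

end
end

section
/- For every integer k ≥ 1 and every N ≥ 2k, there do not exist nonnegative rational numbers c_λ, indexed by the partitions λ of 2k, such that X_{P_{2k}}^{(N)} − k·e_k·X_{P_k}^{(N)} = Σ_{λ ⊢ 2k} c_λ · e_{λ_1} e_{λ_2} ⋯ . (Indeed the coefficient of e_{(k,k)} in the e-expansion of this difference equals −k.) -/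
/-!
Evaluate both sides at `x = (1, ω, …, ω ^ (k - 1), 0, …, 0)`, `ω` a primitive `k`-th root of
unity. The nonzero coordinates are the roots of `X ^ k - 1`, so `e_j(x) = 0` for `0 < j ≠ k` and
`e_k(x) = (-1) ^ (k + 1)`: the right-hand side becomes the sum of the `c_λ` over the partitions
all of whose parts equal `k`, which is nonnegative.

On the left, `X_{P_{n+1}}(x)` sums `∏ ψ (c i)` over the proper colourings `c` of the path by
`ZMod k`, with `ψ a = ω ^ a.val` an additive character. Shifting all colours by `b` multiplies a
term by `ψ b ^ (n + 1)`, and deleting the first vertex gives a recursion in `n`; together with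
`∑ a, ψ a ^ e = k·[k ∣ e]` this yields
`X_{P_{n+1}}(x) = k·[k ∣ n + 1] ∏_{r < n} (k·[k ∣ r + 1] - 1)`. So `X_{P_k}(x) = k (-1) ^ (k - 1)`,
`X_{P_{2k}}(x) = k (k - 1)`, and the left-hand side evaluates to `k (k - 1) - k · k = -k < 0`.
-/

open scoped Classical

noncomputable section

/-- The chromatic symmetric polynomial `X_G^{(N)}` of a finite simple graph `G`, with rational
coefficients: the sum over all proper colorings `c : V → {1,…,N}` of `∏_{v ∈ V} x_{c v}`. -/
def chromPolyQ (N : ℕ) {V : Type} [Fintype V] [DecidableEq V] (G : SimpleGraph V) :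
    MvPolynomial (Fin N) ℚ :=
  ∑ c ∈ Finset.univ.filter (fun c : V → Fin N => ∀ u v, G.Adj u v → c u ≠ c v),
    ∏ v, MvPolynomial.X (c v)

open Finset Function SimpleGraph

theorem aeval_chromPolyQ {K : Type*} {V : Type} [CommSemiring K] [Algebra ℚ K] [Fintype V]
    [DecidableEq V] {N : ℕ} (x : Fin N → K) (G : SimpleGraph V) :
    MvPolynomial.aeval x (chromPolyQ N G)
      = ∑ c : V → Fin N with ∀ u v, G.Adj u v → c u ≠ c v, ∏ v, x (c v) := by
  simp [chromPolyQ]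

def IsPathColoring {α : Type*} {n : ℕ} (c : Fin (n + 1) → α) : Prop :=
  ∀ r : Fin n, c r.castSucc ≠ c r.succ

theorem isPathColoring_cons {α : Type*} {n : ℕ} (a : α) (c : Fin (n + 1) → α) :
    IsPathColoring (Fin.cons a c : Fin (n + 2) → α) ↔ a ≠ c 0 ∧ IsPathColoring c := by
  simp [IsPathColoring, Fin.forall_fin_succ]

theorem pathGraph_proper_iff_isPathColoring {α : Type*} {n : ℕ} (c : Fin (n + 1) → α) :
    (∀ u v, (pathGraph (n + 1)).Adj u v → c u ≠ c v) ↔ IsPathColoring c := by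
  refine ⟨fun h r => h _ _ (pathGraph_adj.2 (Or.inl (by simp))), fun h => ?_⟩
  have step : ∀ u v : Fin (n + 1), u.val + 1 = v.val → c u ≠ c v := by
    intro u v huv
    obtain ⟨r, rfl, rfl⟩ : ∃ r : Fin n, r.castSucc = u ∧ r.succ = v :=
      ⟨⟨u, by omega⟩, rfl, Fin.ext (by simpa using huv)⟩
    exact h r
  intro u v huv
  rcases pathGraph_adj.1 huv with huv | huv
  exacts [step u v huv, (step v u huv).symm]

section PathColoringSum

variable {A R : Type*} [AddGroup A] [Fintype A] [CommRing R] (ψ : AddChar A R)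

def pathColoringWeight (n : ℕ) (b : A) : R :=
  ∑ c : Fin (n + 1) → A with IsPathColoring c ∧ c 0 = b, ∏ i, ψ (c i)

theorem pathColoringWeight_eq_pow_mul (n : ℕ) (b : A) :
    pathColoringWeight ψ n b = ψ b ^ (n + 1) * pathColoringWeight ψ n 0 := by
  rw [pathColoringWeight, pathColoringWeight, mul_sum]
  refine (sum_equiv (Equiv.addRight fun _ => b) (fun c => ?_) (fun c _ => ?_)).symm
  · rw [mem_filter, mem_filter]
    simp [IsPathColoring]
  · simp [AddChar.map_add_eq_mul, prod_mul_distrib, mul_comm]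

theorem sum_isPathColoring_eq_mul (n : ℕ) :
    ∑ c : Fin (n + 1) → A with IsPathColoring c, ∏ i, ψ (c i)
      = (∑ a, ψ a ^ (n + 1)) * pathColoringWeight ψ n 0 := by
  rw [← sum_fiberwise _ (fun c => c 0), sum_mul]
  refine sum_congr rfl fun b _ => ?_
  rw [← pathColoringWeight_eq_pow_mul, pathColoringWeight, filter_filter]

theorem pathColoringWeight_succ (n : ℕ) :
    pathColoringWeight ψ (n + 1) 0
      = (∑ a, ψ a ^ (n + 1) - 1) * pathColoringWeight ψ n 0 := by
  -- delete the first vertex, whose colour is `0`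
  have hcons : pathColoringWeight ψ (n + 1) 0
      = ∑ c : Fin (n + 1) → A with IsPathColoring c ∧ c 0 ≠ 0, ∏ i, ψ (c i) := by
    refine sum_nbij' Fin.tail (fun c => Fin.cons (0 : A) c) (fun c hc => ?_) (fun c hc => ?_)
      (fun c hc => ?_) (fun c _ => Fin.tail_cons _ _) (fun c hc => ?_)
    all_goals simp only [mem_filter, mem_univ, true_and] at hc ⊢
    · obtain ⟨hpath, h0⟩ := hc
      rw [← Fin.cons_self_tail c, isPathColoring_cons, h0] at hpath
      exact ⟨hpath.2, hpath.1.symm⟩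
    · rw [isPathColoring_cons]
      exact ⟨⟨hc.2.symm, hc.1⟩, rfl⟩
    · rw [← hc.2, Fin.cons_self_tail]
    · rw [Fin.prod_univ_succ, hc.2, AddChar.map_zero_eq_one, one_mul]
      rfl
  have hsplit := sum_filter_add_sum_filter_not
    (univ.filter fun c : Fin (n + 1) → A => IsPathColoring c) (fun c => c 0 = 0)
      (fun c => ∏ i, ψ (c i))
  rw [filter_filter, filter_filter, ← pathColoringWeight, sum_isPathColoring_eq_mul] at hsplit
  rw [hcons]
  linear_combination hsplit

theorem pathColoringWeight_zero_zero : pathColoringWeight ψ 0 (0 : A) = 1 := by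
  have hsingle : (univ.filter fun c : Fin 1 → A => IsPathColoring c ∧ c 0 = 0) = {0} := by
    ext c
    simp [IsPathColoring, funext_iff, Fin.forall_fin_one]
  simp [pathColoringWeight, hsingle]

theorem pathColoringWeight_zero_eq_prod (n : ℕ) :
    pathColoringWeight ψ n 0 = ∏ r ∈ range n, (∑ a, ψ a ^ (r + 1) - 1) := by
  induction n with
  | zero => exact pathColoringWeight_zero_zero ψ
  | succ n ih => rw [pathColoringWeight_succ, ih, prod_range_succ, mul_comm]

theorem sum_isPathColoring_prod_addChar (n : ℕ) :
    ∑ c : Fin (n + 1) → A with IsPathColoring c, ∏ i, ψ (c i)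
      = (∑ a, ψ a ^ (n + 1)) * ∏ r ∈ range n, (∑ a, ψ a ^ (r + 1) - 1) := by
  rw [sum_isPathColoring_eq_mul, pathColoringWeight_zero_eq_prod]

end PathColoringSum

section ExtendByZero

open MvPolynomial

variable {A B K : Type*} [Fintype A] [Fintype B] [CommRing K] {ι : A → B}

theorem sum_prod_extend_zero {V : Type*} [Fintype V] [DecidableEq V] (hι : Injective ι)
    (ψ : A → K) (p : (V → B) → Prop) [DecidablePred p] :
    ∑ c : V → B with p c, ∏ v, extend ι ψ 0 (c v)
      = ∑ c : V → A with p (ι ∘ c), ∏ v, ψ (c v) := by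
  let e : (V → A) ↪ (V → B) := Embedding.arrowCongrRight ⟨ι, hι⟩
  calc ∑ c : V → B with p c, ∏ v, extend ι ψ 0 (c v)
      = ∑ c ∈ ({c | p (ι ∘ c)} : Finset (V → A)).map e, ∏ v, extend ι ψ 0 (c v) := by
        refine (sum_subset (fun c hc => ?_) fun c hc hce => ?_).symm
        · obtain ⟨a, ha, rfl⟩ := mem_map.1 hc
          simpa [e] using ha
        · obtain ⟨v, hv⟩ : ∃ v, ∀ a, ι a ≠ c v := by
            by_contra! h
            choose a ha using h
            refine hce (mem_map.2 ⟨a, ?_, funext ha⟩)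
            simpa [show ι ∘ a = c from funext ha] using hc
          exact prod_eq_zero (mem_univ v) (extend_apply' _ _ _ fun ⟨a, ha⟩ => hv a ha)
    _ = ∑ c : V → A with p (ι ∘ c), ∏ v, ψ (c v) := by
        simp [e, hι.extend_apply]

theorem aeval_extend_zero_esymm {R : Type*} [CommSemiring R] [Algebra R K] (hι : Injective ι)
    (ψ : A → K) (j : ℕ) :
    aeval (extend ι ψ 0) (esymm B R j) = (univ.val.map ψ).esymm j := by
  let e : A ↪ B := ⟨ι, hι⟩
  rw [Finset.esymm_map_val, esymm, map_sum]
  simp only [map_prod, MvPolynomial.aeval_X]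
  calc ∑ t ∈ powersetCard j univ, ∏ i ∈ t, extend ι ψ 0 i
      = ∑ t ∈ powersetCard j (univ.map e), ∏ i ∈ t, extend ι ψ 0 i := by
        refine (sum_subset (powersetCard_mono (subset_univ _)) fun t ht hte => ?_).symm
        obtain ⟨i, hit, hi⟩ : ∃ i ∈ t, i ∉ univ.map e := by
          by_contra! h
          exact hte (mem_powersetCard.2 ⟨h, (mem_powersetCard.1 ht).2⟩)
        exact prod_eq_zero hit (extend_apply' _ _ _ fun ⟨a, ha⟩ => hi (by simp [e, ← ha]))
    _ = ∑ t ∈ powersetCard j univ, ∏ a ∈ t, ψ a := by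
        simp [powersetCard_map, e, hι.extend_apply]

end ExtendByZero

section RootsOfUnity

open Polynomial

theorem esymm_nthRoots_one {R : Type*} [CommRing R] [IsDomain R] {ζ : R} {k : ℕ}
    (hζ : IsPrimitiveRoot ζ k) {j : ℕ} (hj : 0 < j) :
    (nthRoots k (1 : R)).esymm j = if j = k then (-1) ^ (k + 1) else 0 := by
  have hcard := hζ.card_nthRoots_one
  rcases lt_or_ge k j with hkj | hjk
  · rw [if_neg hkj.ne', Multiset.esymm, Multiset.powersetCard_eq_empty _ (by rwa [hcard])]
    simp
  have hk : k ≠ 0 := by omega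
  have hdeg : (X ^ k - C 1 : R[X]).natDegree = k := natDegree_X_pow_sub_C
  have hvieta := coeff_eq_esymm_roots_of_card (p := (X ^ k - C 1 : R[X]))
    (by rw [hdeg]; exact hcard) (k := k - j) (by rw [hdeg]; omega)
  rw [(monic_X_pow_sub_C (1 : R) hk).leadingCoeff, hdeg, Nat.sub_sub_self hjk, one_mul,
    ← nthRoots, coeff_sub, coeff_X_pow, coeff_C] at hvieta
  rw [if_neg (by omega)] at hvieta
  by_cases hjk' : j = k
  · subst hjk'
    have hsq : ((-1 : R) ^ j) * (-1) ^ j = 1 := by rw [← mul_pow]; simp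
    rw [if_pos (Nat.sub_self j)] at hvieta
    rw [if_pos rfl]
    linear_combination (-(-1 : R) ^ j) * hvieta - (nthRoots j (1 : R)).esymm j * hsq
  · rw [if_neg (by omega), sub_self] at hvieta
    rw [if_neg hjk']
    exact (mul_eq_zero.1 hvieta.symm).resolve_left (pow_ne_zero _ (by norm_num))

end RootsOfUnity

section ZModChar

open Polynomial

variable {k : ℕ} [NeZero k]

theorem IsPrimitiveRoot.zmodChar_pow_eq_zero_iff {M : Type*} [CommMonoid M] {ω : M}
    (hω : IsPrimitiveRoot ω k) (e : ℕ) :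
    AddChar.zmodChar k hω.pow_eq_one ^ e = 0 ↔ k ∣ e := by
  rw [AddChar.eq_zero_iff, ← hω.pow_eq_one_iff_dvd]
  refine ⟨fun h => ?_, fun h a => ?_⟩
  · have h1 := h (1 : ℕ)
    rwa [AddChar.pow_apply, AddChar.zmodChar_apply', pow_one] at h1
  rw [AddChar.pow_apply, AddChar.zmodChar_apply, ← pow_mul, mul_comm, pow_mul, h, one_pow]

variable {R : Type*} [CommRing R] [IsDomain R] {ω : R}

theorem IsPrimitiveRoot.sum_zmodChar_pow (hω : IsPrimitiveRoot ω k) (e : ℕ) :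
    ∑ a, AddChar.zmodChar k hω.pow_eq_one a ^ e = if k ∣ e then (k : R) else 0 := by
  simp_rw [← AddChar.pow_apply, AddChar.sum_eq_ite, hω.zmodChar_pow_eq_zero_iff, ZMod.card]

theorem IsPrimitiveRoot.map_zmodChar_univ (hω : IsPrimitiveRoot ω k) :
    (univ : Finset (ZMod k)).val.map (AddChar.zmodChar k hω.pow_eq_one) = nthRoots k 1 := by
  have hinj : Injective (AddChar.zmodChar k hω.pow_eq_one) := fun a b hab =>
    ZMod.val_injective k (hω.pow_inj (ZMod.val_lt a) (ZMod.val_lt b) hab)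
  refine Multiset.eq_of_le_of_card_le ((Multiset.le_iff_subset
    (Multiset.Nodup.map hinj univ.nodup)).2 fun z hz => ?_) ?_
  · obtain ⟨a, -, rfl⟩ := Multiset.mem_map.1 hz
    rw [mem_nthRoots (NeZero.pos k), ← AddChar.map_nsmul_eq_pow, nsmul_eq_mul, ZMod.natCast_self,
      zero_mul, AddChar.map_zero_eq_one]
  · simp [hω.card_nthRoots_one]

end ZModChar

theorem Nat.Partition.card_parts_mul_of_forall_eq {n k : ℕ} (P : n.Partition)
    (h : ∀ j ∈ P.parts, j = k) : Multiset.card P.parts * k = n := by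
  have hsum := P.parts_sum
  rwa [Multiset.eq_replicate_card.2 h, Multiset.sum_replicate, smul_eq_mul] at hsum

section RootsOfUnityPoint

open MvPolynomial

variable {K : Type*} [CommRing K] [IsDomain K] [Algebra ℚ K] {k N : ℕ} [NeZero k] {ω : K}

def ZMod.valFin (hkN : k ≤ N) (a : ZMod k) : Fin N := ⟨a.val, (ZMod.val_lt a).trans_le hkN⟩

theorem ZMod.valFin_injective (hkN : k ≤ N) : Injective (ZMod.valFin hkN) :=
  fun _ _ hab => ZMod.val_injective k (Fin.mk.inj_iff.1 hab)

/-- The point `(1, ω, …, ω ^ (k - 1), 0, …, 0)`. -/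
def rootsOfUnityPoint (hkN : k ≤ N) (hω : IsPrimitiveRoot ω k) : Fin N → K :=
  extend (ZMod.valFin hkN) (AddChar.zmodChar k hω.pow_eq_one) 0

variable (hkN : k ≤ N) (hω : IsPrimitiveRoot ω k)

theorem aeval_rootsOfUnityPoint_esymm {j : ℕ} (hj : 0 < j) :
    aeval (rootsOfUnityPoint hkN hω) (esymm (Fin N) ℚ j)
      = if j = k then (-1) ^ (k + 1) else 0 := by
  rw [rootsOfUnityPoint, aeval_extend_zero_esymm (ZMod.valFin_injective hkN),
    hω.map_zmodChar_univ, esymm_nthRoots_one hω hj]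

theorem aeval_rootsOfUnityPoint_chromPolyQ_pathGraph (n : ℕ) :
    aeval (rootsOfUnityPoint hkN hω) (chromPolyQ N (pathGraph (n + 1)))
      = (if k ∣ n + 1 then (k : K) else 0)
        * ∏ r ∈ range n, ((if k ∣ r + 1 then (k : K) else 0) - 1) := by
  rw [aeval_chromPolyQ, rootsOfUnityPoint, sum_prod_extend_zero (ZMod.valFin_injective hkN)]
  simp only [comp_apply, (ZMod.valFin_injective hkN).ne_iff, pathGraph_proper_iff_isPathColoring,
    sum_isPathColoring_prod_addChar, hω.sum_zmodChar_pow]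

theorem aeval_rootsOfUnityPoint_prod_esymm {n : ℕ} (P : n.Partition) :
    aeval (rootsOfUnityPoint hkN hω) (P.parts.map (esymm (Fin N) ℚ)).prod
      = if ∀ j ∈ P.parts, j = k then (-1) ^ ((k + 1) * Multiset.card P.parts) else 0 := by
  rw [map_multiset_prod, Multiset.map_map]
  split_ifs with h
  · rw [Multiset.map_congr rfl fun j hj => by
      rw [comp_apply, aeval_rootsOfUnityPoint_esymm hkN hω (P.parts_pos hj), if_pos (h j hj)],
      Multiset.map_const', Multiset.prod_replicate, pow_mul]
  · obtain ⟨j, hj, hjk⟩ := not_forall₂.1 h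
    refine Multiset.prod_eq_zero (Multiset.mem_map.2 ⟨j, hj, ?_⟩)
    rw [comp_apply, aeval_rootsOfUnityPoint_esymm hkN hω (P.parts_pos hj), if_neg hjk]

theorem aeval_rootsOfUnityPoint_prod_esymm_two_mul (P : (2 * k).Partition) :
    aeval (rootsOfUnityPoint hkN hω) (P.parts.map (esymm (Fin N) ℚ)).prod
      = if ∀ j ∈ P.parts, j = k then 1 else 0 := by
  rw [aeval_rootsOfUnityPoint_prod_esymm]
  refine if_ctx_congr Iff.rfl (fun h => ?_) fun _ => rfl
  have hcard : Multiset.card P.parts = 2 :=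
    Nat.eq_of_mul_eq_mul_right (NeZero.pos k) (P.card_parts_mul_of_forall_eq h)
  rw [hcard, mul_comm, pow_mul, neg_one_sq, one_pow]

theorem aeval_rootsOfUnityPoint_sum_smul_prod_esymm (c : (2 * k).Partition → ℚ) :
    aeval (rootsOfUnityPoint hkN hω) (∑ P, c P • (P.parts.map (esymm (Fin N) ℚ)).prod)
      = algebraMap ℚ K (∑ P with ∀ j ∈ P.parts, j = k, c P) := by
  simp only [map_sum, map_smul, aeval_rootsOfUnityPoint_prod_esymm_two_mul, smul_ite, smul_zero]
  rw [← sum_filter]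
  simp only [Algebra.smul_def, mul_one]

end RootsOfUnityPoint

theorem prod_range_ite_dvd_sub_one_of_le {K : Type*} [CommRing K] {m n : ℕ} (hn : n ≤ m) :
    ∏ r ∈ range n, ((if m + 1 ∣ r + 1 then ((m + 1 : ℕ) : K) else 0) - 1) = (-1) ^ n := by
  rw [prod_congr rfl fun r hr => by
    rw [if_neg (Nat.not_dvd_of_pos_of_lt r.succ_pos (by simp at hr; omega)), zero_sub],
    prod_const, card_range]

section PathValues

open MvPolynomial

variable {K : Type*} [CommRing K] [IsDomain K] [Algebra ℚ K] {m N : ℕ} {ω : K}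
  (hkN : m + 1 ≤ N) (hω : IsPrimitiveRoot ω (m + 1))

theorem aeval_rootsOfUnityPoint_chromPolyQ_pathGraph_self :
    aeval (rootsOfUnityPoint hkN hω) (chromPolyQ N (pathGraph (m + 1)))
      = ((m + 1 : ℕ) : K) * (-1) ^ m := by
  rw [aeval_rootsOfUnityPoint_chromPolyQ_pathGraph, if_pos dvd_rfl,
    prod_range_ite_dvd_sub_one_of_le le_rfl]

theorem aeval_rootsOfUnityPoint_chromPolyQ_pathGraph_two_mul :
    aeval (rootsOfUnityPoint hkN hω) (chromPolyQ N (pathGraph (2 * (m + 1))))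
      = ((m + 1 : ℕ) : K) * m := by
  have hperiod : ∀ r ∈ range m, (if m + 1 ∣ m + 1 + r + 1 then ((m + 1 : ℕ) : K) else 0) - 1
      = (if m + 1 ∣ r + 1 then ((m + 1 : ℕ) : K) else 0) - 1 := fun r _ => by
    simp only [show m + 1 + r + 1 = (m + 1) + (r + 1) by ring, Nat.dvd_add_right dvd_rfl]
  rw [show 2 * (m + 1) = 2 * m + 1 + 1 by ring, aeval_rootsOfUnityPoint_chromPolyQ_pathGraph,
    if_pos (Dvd.intro_left 2 (by ring)), show 2 * m + 1 = m + 1 + m by ring, prod_range_add,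
    prod_range_succ, prod_congr rfl hperiod, if_pos dvd_rfl,
    prod_range_ite_dvd_sub_one_of_le le_rfl]
  have hsq : ((-1 : K) ^ m) * (-1) ^ m = 1 := by rw [← mul_pow]; simp
  push_cast
  linear_combination ((m : K) + 1) * m * hsq

theorem aeval_rootsOfUnityPoint_chromPolyQ_pathGraph_sub_smul_esymm_mul :
    aeval (rootsOfUnityPoint hkN hω) (chromPolyQ N (pathGraph (2 * (m + 1)))
        - ((m + 1 : ℕ) : ℚ) • (esymm (Fin N) ℚ (m + 1) * chromPolyQ N (pathGraph (m + 1))))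
      = -((m + 1 : ℕ) : K) := by
  rw [map_sub, map_smul, map_mul, aeval_rootsOfUnityPoint_chromPolyQ_pathGraph_two_mul,
    aeval_rootsOfUnityPoint_chromPolyQ_pathGraph_self,
    aeval_rootsOfUnityPoint_esymm hkN hω m.succ_pos,
    if_pos rfl, Algebra.smul_def, map_natCast]
  have hsq : ((-1 : K) ^ m) * (-1) ^ m = 1 := by rw [← mul_pow]; simp
  push_cast
  linear_combination -((m : K) + 1) ^ 2 * hsq

end PathValues

/-- For every `k ≥ 1` and every `N ≥ 2k`, there do **not** exist nonnegative rational
numbers `c_λ`, indexed by the partitions `λ ⊢ 2k`, with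
`X_{P_{2k}} − k·e_k·X_{P_k} = ∑_{λ ⊢ 2k} c_λ e_{λ₁} e_{λ₂} ⋯`. -/
theorem chromPoly_pathGraph_sub_k_esymm_not_ePositive (k N : ℕ) (hk : 1 ≤ k) (hN : 2 * k ≤ N) :
    ¬ ∃ c : (2 * k).Partition → ℚ, (∀ P, 0 ≤ c P) ∧
        chromPolyQ N (SimpleGraph.pathGraph (2 * k))
            - (k : ℚ) • (MvPolynomial.esymm (Fin N) ℚ k *
                chromPolyQ N (SimpleGraph.pathGraph k))
          = ∑ P : (2 * k).Partition, c P • (P.parts.map (MvPolynomial.esymm (Fin N) ℚ)).prod := by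
  obtain ⟨m, rfl⟩ : ∃ m, k = m + 1 := ⟨k - 1, by omega⟩
  rintro ⟨c, hc, heq⟩
  have hkN : m + 1 ≤ N := by omega
  have hω := Complex.isPrimitiveRoot_exp (m + 1) m.succ_ne_zero
  have hval := congrArg (MvPolynomial.aeval (rootsOfUnityPoint hkN hω)) heq
  rw [aeval_rootsOfUnityPoint_chromPolyQ_pathGraph_sub_smul_esymm_mul,
    aeval_rootsOfUnityPoint_sum_smul_prod_esymm] at hval
  have hsum : ∑ P with ∀ j ∈ P.parts, j = m + 1, c P = -((m + 1 : ℕ) : ℚ) :=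
    (algebraMap ℚ ℂ).injective (by rw [← hval, map_neg, map_natCast])
  have hnonneg : 0 ≤ ∑ P with ∀ j ∈ P.parts, j = m + 1, c P := sum_nonneg fun P _ => hc P
  rw [hsum] at hnonneg
  linarith [show (0 : ℚ) < ((m + 1 : ℕ) : ℚ) by positivity]

end
end
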